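/- arXiv:1106.2985 — 9 statements merged into one kernel-verified Lean document; each statement's English description precedes it below -/
import Mathlib

section
/- Let m > 0. There exists f ∈ L¹(ℝ;ℂ), not zero almost everywhere, such that ∫_ℝ f(t)·exp(iπτt) dt = 0 for all τ ≥ 0, and whose hyperbola Fourier transform vanishes on the whole closed space-like quarter-plane: F_f(ξ₁,ξ₂) = ∫_ℝ f(t)·exp(iπ(ξ₁t − m²ξ₂/(4π²t))) dt = 0 for all ξ₁ ≥ 0 and ξ₂ ≥ 0. (Hence the closed quarter-plane cl(ℝ₊×ℝ₊) is not a Fourier uniqueness set for the Hardy-type measures ACH(Γ_m) on the hyperbola.) -/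
open MeasureTheory Real
open Complex Filter Topology Set

/-!
The witness is `f t = (t + i)⁻²`. For `a, s ≥ 0` the phase `a t - s / t` is the boundary value of
`a z - s / z`, whose imaginary part `a Im z + s Im z / |z|²` is nonnegative on the upper
half-plane; so `g z = exp (i (a z - s / z)) / (z + i)²` is holomorphic there and bounded by
`|z + i|⁻²`. By Cauchy's theorem on rectangles, the integral of `g` along the line `Im z = y`
does not depend on `y > 0`; it tends to `0` as `y → ∞` and to `∫ g` over `ℝ` as `y → 0⁺`.
The two vanishing conditions are the cases `(a, s) = (π τ, 0)` and `(π ξ₁, m² ξ₂ / (4 π))`.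
-/

lemma sq_norm_add_I (z : ℂ) : ‖z + I‖ ^ 2 = z.re ^ 2 + (z.im + 1) ^ 2 := by
  rw [Complex.sq_norm, normSq_apply]; simp; ring

lemma add_I_ne_zero_of_nonneg_im {z : ℂ} (hz : 0 ≤ z.im) : z + I ≠ 0 := by
  intro h
  have := congrArg im h
  simp at this
  linarith

lemma integrable_div_sq_add_one (C : ℝ) : Integrable fun x : ℝ => C / (x ^ 2 + 1) := by
  simpa [div_eq_mul_inv, add_comm] using integrable_inv_one_add_sq.const_mul C

lemma norm_le_div_sq_add_one {E : Type*} [NormedAddCommGroup E] {g : ℂ → E} {C : ℝ}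
    (hb : ∀ z : ℂ, 0 < z.im → ‖g z‖ ≤ C / ‖z + I‖ ^ 2) {z : ℂ} (hz : 0 < z.im) :
    ‖g z‖ ≤ C / (z.re ^ 2 + 1) := by
  have hgz := hb z hz
  rw [sq_norm_add_I] at hgz
  have hC : 0 ≤ C := by
    simpa using (le_div_iff₀ (by positivity)).1 ((norm_nonneg _).trans hgz)
  exact hgz.trans (div_le_div_of_nonneg_left hC (by positivity) (by nlinarith))

section UpperHalfPlane

variable {E : Type*} [NormedAddCommGroup E] [NormedSpace ℂ E]
  {g : ℂ → E} {C : ℝ}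

lemma integrable_comp_add_mul_I (hd : DifferentiableOn ℂ g {z | 0 < z.im})
    (hb : ∀ z : ℂ, 0 < z.im → ‖g z‖ ≤ C / ‖z + I‖ ^ 2) {y : ℝ} (hy : 0 < y) :
    Integrable fun x : ℝ => g (x + y * I) := by
  have hcont : Continuous fun x : ℝ => g (x + y * I) :=
    hd.continuousOn.comp_continuous (by fun_prop) (fun x => by simpa using hy)
  refine (integrable_div_sq_add_one C).mono' hcont.aestronglyMeasurable (.of_forall fun x => ?_)
  simpa using norm_le_div_sq_add_one hb (z := x + y * I) (by simpa using hy)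

lemma tendsto_intervalIntegral_vertical_cocompact
    (hb : ∀ z : ℂ, 0 < z.im → ‖g z‖ ≤ C / ‖z + I‖ ^ 2) {y₁ y₂ : ℝ} (hy₁ : 0 < y₁) (hy₂ : 0 < y₂) :
    Tendsto (fun x : ℝ => ∫ y in y₁..y₂, g (x + y * I)) (cocompact ℝ) (𝓝 0) := by
  refine squeeze_zero_norm (a := fun x : ℝ => C / (x ^ 2 + 1) * |y₂ - y₁|) (fun x => ?_) ?_
  · refine intervalIntegral.norm_integral_le_of_norm_le_const fun y hy => ?_
    have hy0 : 0 < y := lt_of_lt_of_le (lt_min hy₁ hy₂) (uIoc_subset_uIcc hy).1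
    simpa using norm_le_div_sq_add_one hb (z := x + y * I) (by simpa using hy0)
  · have hsq : Tendsto (fun x : ℝ => x ^ 2 + 1) (cocompact ℝ) atTop :=
      tendsto_atTop_add_const_right _ _ <|
        ((tendsto_pow_atTop two_ne_zero).comp (tendsto_norm_cocompact_atTop (E := ℝ))).congr
          fun x => by simp
    simpa [div_eq_mul_inv] using ((hsq.inv_tendsto_atTop.const_mul C).mul_const |y₂ - y₁|)

lemma integral_comp_add_mul_I_eq [CompleteSpace E] (hd : DifferentiableOn ℂ g {z | 0 < z.im})
    (hb : ∀ z : ℂ, 0 < z.im → ‖g z‖ ≤ C / ‖z + I‖ ^ 2) {y₁ y₂ : ℝ} (hy₁ : 0 < y₁) (hy₂ : 0 < y₂) :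
    ∫ x : ℝ, g (x + y₁ * I) = ∫ x : ℝ, g (x + y₂ * I) := by
  have hrect : ∀ R : ℝ, (∫ x in -R..R, g (x + y₁ * I)) - (∫ x in -R..R, g (x + y₂ * I)) +
      I • (∫ y in y₁..y₂, g (R + y * I)) - I • (∫ y in y₁..y₂, g ((-R : ℝ) + y * I)) = 0 := by
    intro R
    have hsub : uIcc (-R + y₁ * I : ℂ).re (R + y₂ * I : ℂ).re ×ℂ
        uIcc (-R + y₁ * I : ℂ).im (R + y₂ * I : ℂ).im ⊆ {z | 0 < z.im} := by
      intro z hz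
      have hz' : z.im ∈ uIcc y₁ y₂ := by simpa using hz.2
      exact lt_of_lt_of_le (lt_min hy₁ hy₂) hz'.1
    simpa using integral_boundary_rect_eq_zero_of_differentiableOn g _ _ (hd.mono hsub)
  have hhoriz {y : ℝ} (hy : 0 < y) := intervalIntegral_tendsto_integral
    (integrable_comp_add_mul_I hd hb hy) tendsto_neg_atTop_atBot tendsto_id
  have hvert := tendsto_intervalIntegral_vertical_cocompact hb hy₁ hy₂
  have hlim := (((hhoriz hy₁).sub (hhoriz hy₂)).add
    ((hvert.comp (tendsto_id.mono_right atTop_le_cocompact)).const_smul I)).sub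
    ((hvert.comp (tendsto_neg_atTop_atBot.mono_right atBot_le_cocompact)).const_smul I)
  have hzero := hlim.congr hrect
  simp only [smul_zero, add_zero, sub_zero] at hzero
  exact sub_eq_zero.1 (tendsto_nhds_unique hzero tendsto_const_nhds)

lemma tendsto_integral_comp_add_mul_I_atTop (hd : DifferentiableOn ℂ g {z | 0 < z.im})
    (hb : ∀ z : ℂ, 0 < z.im → ‖g z‖ ≤ C / ‖z + I‖ ^ 2) :
    Tendsto (fun y : ℝ => ∫ x : ℝ, g (x + y * I)) atTop (𝓝 0) := by
  rw [← integral_zero ℝ E]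
  refine tendsto_integral_filter_of_dominated_convergence _ ?_ ?_
    (integrable_div_sq_add_one C) (.of_forall fun x => ?_)
  · filter_upwards [eventually_gt_atTop 0] with y hy
    exact (integrable_comp_add_mul_I hd hb hy).aestronglyMeasurable
  · filter_upwards [eventually_gt_atTop 0] with y hy
    exact .of_forall fun x => by
      simpa using norm_le_div_sq_add_one hb (z := x + y * I) (by simpa using hy)
  · have hden : Tendsto (fun y : ℝ => x ^ 2 + (y + 1) ^ 2) atTop atTop :=
      tendsto_atTop_add_const_left _ _ <|
        (tendsto_pow_atTop two_ne_zero).comp (tendsto_atTop_add_const_right _ 1 tendsto_id)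
    refine squeeze_zero_norm' ?_ ((tendsto_const_nhds (x := C)).div_atTop hden)
    filter_upwards [eventually_gt_atTop 0] with y hy
    have := hb (x + y * I) (by simpa using hy)
    rw [sq_norm_add_I] at this
    simpa using this

lemma tendsto_integral_comp_add_mul_I_nhdsGT_zero (hd : DifferentiableOn ℂ g {z | 0 < z.im})
    (hb : ∀ z : ℂ, 0 < z.im → ‖g z‖ ≤ C / ‖z + I‖ ^ 2)
    (hc : ∀ᵐ x : ℝ, ContinuousWithinAt g {z | 0 < z.im} x) :
    Tendsto (fun y : ℝ => ∫ x : ℝ, g (x + y * I)) (𝓝[>] 0) (𝓝 (∫ x : ℝ, g x)) := by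
  refine tendsto_integral_filter_of_dominated_convergence _ ?_ ?_
    (integrable_div_sq_add_one C) ?_
  · filter_upwards [self_mem_nhdsWithin] with y hy
    exact (integrable_comp_add_mul_I hd hb hy).aestronglyMeasurable
  · filter_upwards [self_mem_nhdsWithin] with y hy
    exact .of_forall fun x => by
      simpa using norm_le_div_sq_add_one hb (z := x + y * I) (by simpa using hy)
  · filter_upwards [hc] with x hx
    have hline : Tendsto (fun y : ℝ => (x : ℂ) + y * I) (𝓝[>] 0) (𝓝[{z | 0 < z.im}] x) := by
      refine tendsto_nhdsWithin_iff.2 ⟨?_, ?_⟩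
      · exact (Continuous.tendsto' (by fun_prop) 0 _ (by simp)).mono_left nhdsWithin_le_nhds
      · filter_upwards [self_mem_nhdsWithin] with y hy
        simpa using hy
    exact hx.tendsto.comp hline

theorem integral_eq_zero_of_differentiableOn_upperHalfPlane [CompleteSpace E]
    (hd : DifferentiableOn ℂ g {z | 0 < z.im})
    (hb : ∀ z : ℂ, 0 < z.im → ‖g z‖ ≤ C / ‖z + I‖ ^ 2)
    (hc : ∀ᵐ x : ℝ, ContinuousWithinAt g {z | 0 < z.im} x) :
    ∫ x : ℝ, g x = 0 := by
  set J := fun y : ℝ => ∫ x : ℝ, g (x + y * I)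
  have hJ : ∀ y, 0 < y → J y = J 1 := fun y hy => integral_comp_add_mul_I_eq hd hb hy one_pos
  have hJ1 : J 1 = 0 := by
    refine tendsto_nhds_unique (tendsto_const_nhds.congr' ?_)
      (tendsto_integral_comp_add_mul_I_atTop hd hb)
    filter_upwards [eventually_gt_atTop 0] with y hy using (hJ y hy).symm
  refine tendsto_nhds_unique (tendsto_integral_comp_add_mul_I_nhdsGT_zero hd hb hc)
    (tendsto_const_nhds.congr' ?_)
  filter_upwards [self_mem_nhdsWithin] with y hy
  exact ((hJ y hy).trans hJ1).symm

end UpperHalfPlane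

lemma norm_cexp_I_mul_sub_div_le_one {a s : ℝ} (ha : 0 ≤ a) (hs : 0 ≤ s) {z : ℂ}
    (hz : 0 ≤ z.im) : ‖cexp (I * (a * z - s / z))‖ ≤ 1 := by
  rw [norm_exp, Real.exp_le_one_iff]
  have : 0 ≤ s * z.im / normSq z := div_nonneg (mul_nonneg hs hz) (normSq_nonneg z)
  simp [div_im]
  linarith [mul_nonneg ha hz]

lemma differentiableAt_cexp_I_mul_sub_div_div_sq (a s : ℝ) {z : ℂ} (hz : z ≠ 0)
    (hzI : z + I ≠ 0) :
    DifferentiableAt ℂ (fun z : ℂ => cexp (I * (a * z - s / z)) / (z + I) ^ 2) z := by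
  fun_prop (disch := simp [hzI])

theorem integral_inv_add_I_sq_mul_cexp_eq_zero {a s : ℝ} (ha : 0 ≤ a) (hs : 0 ≤ s) :
    ∫ t : ℝ, ((t + I) ^ 2)⁻¹ * cexp (I * ((a * t - s / t : ℝ) : ℂ)) = 0 := by
  set g := fun z : ℂ => cexp (I * (a * z - s / z)) / (z + I) ^ 2
  have hdiff {z : ℂ} (hz : z ≠ 0) (hzI : z + I ≠ 0) : DifferentiableAt ℂ g z :=
    differentiableAt_cexp_I_mul_sub_div_div_sq a s hz hzI
  have hd : DifferentiableOn ℂ g {z | 0 < z.im} := fun z hz =>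
    (hdiff (fun h => by simp [h] at hz) (add_I_ne_zero_of_nonneg_im hz.le)).differentiableWithinAt
  have hb (z : ℂ) (hz : 0 < z.im) : ‖g z‖ ≤ 1 / ‖z + I‖ ^ 2 := by
    simp only [g, norm_div, norm_pow]
    exact div_le_div_of_nonneg_right (norm_cexp_I_mul_sub_div_le_one ha hs hz.le) (by positivity)
  have hc : ∀ᵐ x : ℝ, ContinuousWithinAt g {z | 0 < z.im} x := by
    filter_upwards [Measure.ae_ne volume 0] with x hx
    exact (hdiff (by exact_mod_cast hx)
      (add_I_ne_zero_of_nonneg_im (by simp))).continuousAt.continuousWithinAt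
  rw [← integral_eq_zero_of_differentiableOn_upperHalfPlane hd hb hc]
  congr 1 with t
  simp only [g]
  push_cast
  ring

lemma continuous_inv_ofReal_add_I_sq : Continuous fun t : ℝ => ((t + I : ℂ) ^ 2)⁻¹ :=
  Continuous.inv₀ (by fun_prop) fun t => pow_ne_zero 2 (add_I_ne_zero_of_nonneg_im (by simp))

lemma integrable_inv_ofReal_add_I_sq : Integrable fun t : ℝ => ((t + I : ℂ) ^ 2)⁻¹ := by
  refine (integrable_div_sq_add_one 1).mono' continuous_inv_ofReal_add_I_sq.aestronglyMeasurable
    (.of_forall fun t => le_of_eq ?_)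
  simp [sq_norm_add_I]

theorem stmt3_general (m : ℝ) :
    ∃ f : ℝ → ℂ, Integrable f ∧ ¬ (f =ᵐ[volume] 0) ∧
      (∀ τ : ℝ, 0 ≤ τ →
        ∫ t : ℝ, f t * Complex.exp (Complex.I * ((π * τ * t : ℝ) : ℂ)) = 0) ∧
      (∀ ξ₁ ξ₂ : ℝ, 0 ≤ ξ₁ → 0 ≤ ξ₂ →
        ∫ t : ℝ, f t * Complex.exp
          (Complex.I * ((π * (ξ₁ * t - m ^ 2 * ξ₂ / (4 * π ^ 2 * t)) : ℝ) : ℂ)) = 0) := by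
  refine ⟨fun t => ((t + I) ^ 2)⁻¹, integrable_inv_ofReal_add_I_sq, fun h => ?_,
    fun τ hτ => ?_, fun ξ₁ ξ₂ hξ₁ hξ₂ => ?_⟩
  · have := congrFun ((continuous_inv_ofReal_add_I_sq.ae_eq_iff_eq volume continuous_zero).1 h) 0
    simp at this
  · simpa using integral_inv_add_I_sq_mul_cexp_eq_zero (a := π * τ) (by positivity) le_rfl
  · convert integral_inv_add_I_sq_mul_cexp_eq_zero (a := π * ξ₁) (s := m ^ 2 * ξ₂ / (4 * π))
      (by positivity) (by positivity) using 6 with t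
    field_simp

/-- The closed space-like quarter-plane `cl(ℝ₊ × ℝ₊)` is not a Fourier uniqueness
set for the Hardy-type measures `ACH(Γ_m)` on the hyperbola: there is a nonzero
integrable density `f` (in `H¹₊(ℝ)`) whose hyperbola Fourier transform
`F_f(ξ₁,ξ₂) = ∫ f(t) exp(iπ(ξ₁t − m²ξ₂/(4π²t))) dt` vanishes for all
`ξ₁ ≥ 0`, `ξ₂ ≥ 0`. -/
theorem stmt3 (m : ℝ) (hm : 0 < m) :
    ∃ f : ℝ → ℂ, Integrable f ∧ ¬ (f =ᵐ[volume] 0) ∧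
      (∀ τ : ℝ, 0 ≤ τ →
        ∫ t : ℝ, f t * Complex.exp (Complex.I * ((π * τ * t : ℝ) : ℂ)) = 0) ∧
      (∀ ξ₁ ξ₂ : ℝ, 0 ≤ ξ₁ → 0 ≤ ξ₂ →
        ∫ t : ℝ, f t * Complex.exp
          (Complex.I * ((π * (ξ₁ * t - m ^ 2 * ξ₂ / (4 * π ^ 2 * t)) : ℝ) : ℂ)) = 0) :=
  stmt3_general m
end

section
/- Let β > 0 and let z₀ ∈ ℂ with Im z₀ > 0. Define f : ℝ → ℂ by f(t) = 1/(t − z₀) − 1/(t − 2 − z₀). Then: (i) f is integrable on ℝ and not zero almost everywhere; (ii) ∫_ℝ f(t)·exp(iπτt) dt = 0 for all τ < 0; (iii) ∫_ℝ f(t)·exp(iπjt) dt = 2πi(e^{iπjz₀} − e^{iπj(z₀+2)}) = 0 for every integer j ≥ 0; (iv) ∫_ℝ f(t)·exp(iπβk/t) dt = 0 for every integer k ≥ 0. -/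
open MeasureTheory Real Complex Set FourierTransform

/-!
Write `f = cauchyDiff z₀ (z₀ + 2)`, where `cauchyDiff w₁ w₂ t = 1/(t - w₁) - 1/(t - w₂)`.
For `w₁, w₂` in the upper half-plane, `cauchyDiff w₁ w₂` is integrable (it is `O(t⁻²)`) and is
the Fourier transform of the continuous integrable function
`s ↦ 2πi 𝟙_{s ≥ 0} (e^{2πisw₁} - e^{2πisw₂})`, so Fourier inversion gives
`∫ cauchyDiff w₁ w₂ t · e^{iat} dt = 2πi 𝟙_{a ≥ 0} (e^{iaw₁} - e^{iaw₂})`.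
This gives (ii) and (iii); the value in (iii) vanishes because `z ↦ e^{iπjz}` is `2`-periodic.
For (iv), the substitution `t = -1/u` preserves the upper half-plane and turns
`cauchyDiff w₁ w₂ t · e^{ic/t} dt` into `cauchyDiff (-1/w₁) (-1/w₂) u · e^{-icu} du`,
which integrates to zero since `-c ≤ 0`.
-/

noncomputable def cauchyDiff (w₁ w₂ : ℂ) (t : ℝ) : ℂ := 1 / (t - w₁) - 1 / (t - w₂)

lemma ofReal_sub_ne_zero_of_im_ne_zero {w : ℂ} (hw : w.im ≠ 0) (t : ℝ) : (t : ℂ) - w ≠ 0 :=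
  fun h => hw (by simpa using congrArg im h)

lemma integrable_inv_norm_ofReal_sub_sq {w : ℂ} (hw : w.im ≠ 0) :
    Integrable fun t : ℝ => ‖(t : ℂ) - w‖⁻¹ ^ 2 := by
  set m := min 1 (w.im ^ 2)
  have hm : 0 < m := lt_min one_pos (by positivity)
  refine ((integrable_inv_one_add_sq.comp_sub_right w.re).const_mul m⁻¹).mono'
    (by fun_prop) (ae_of_all _ fun t => ?_)
  have hnormSq : ‖(t : ℂ) - w‖ ^ 2 = (t - w.re) ^ 2 + w.im ^ 2 := by
    rw [← normSq_eq_norm_sq, normSq_apply]; simp; ring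
  have hlow : m * (1 + (t - w.re) ^ 2) ≤ ‖(t : ℂ) - w‖ ^ 2 := by
    rw [hnormSq]
    nlinarith [min_le_left 1 (w.im ^ 2), min_le_right 1 (w.im ^ 2), sq_nonneg (t - w.re)]
  rw [norm_pow, norm_inv, norm_norm, inv_pow, ← mul_inv]
  exact inv_anti₀ (by positivity) hlow

lemma norm_cauchyDiff_le {w₁ w₂ : ℂ} (h₁ : w₁.im ≠ 0) (h₂ : w₂.im ≠ 0) (t : ℝ) :
    ‖cauchyDiff w₁ w₂ t‖ ≤ ‖w₁ - w₂‖ / 2 * (‖(t : ℂ) - w₁‖⁻¹ ^ 2 + ‖(t : ℂ) - w₂‖⁻¹ ^ 2) := by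
  have hne₁ := ofReal_sub_ne_zero_of_im_ne_zero h₁ t
  have hne₂ := ofReal_sub_ne_zero_of_im_ne_zero h₂ t
  have hdiff : cauchyDiff w₁ w₂ t = (w₁ - w₂) * (((t : ℂ) - w₁)⁻¹ * ((t : ℂ) - w₂)⁻¹) := by
    rw [cauchyDiff]; field_simp; ring
  rw [hdiff, norm_mul, norm_mul, norm_inv, norm_inv, div_mul_eq_mul_div, le_div_iff₀ two_pos,
    mul_assoc]
  gcongr
  nlinarith [sq_nonneg (‖(t : ℂ) - w₁‖⁻¹ - ‖(t : ℂ) - w₂‖⁻¹)]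

lemma continuous_cauchyDiff {w₁ w₂ : ℂ} (h₁ : w₁.im ≠ 0) (h₂ : w₂.im ≠ 0) :
    Continuous (cauchyDiff w₁ w₂) := by
  unfold cauchyDiff
  exact .sub (continuous_const.div (by fun_prop) (ofReal_sub_ne_zero_of_im_ne_zero h₁))
    (continuous_const.div (by fun_prop) (ofReal_sub_ne_zero_of_im_ne_zero h₂))

lemma integrable_cauchyDiff {w₁ w₂ : ℂ} (h₁ : w₁.im ≠ 0) (h₂ : w₂.im ≠ 0) :
    Integrable (cauchyDiff w₁ w₂) :=
  (((integrable_inv_norm_ofReal_sub_sq h₁).add (integrable_inv_norm_ofReal_sub_sq h₂)).const_mul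
    _).mono' (continuous_cauchyDiff h₁ h₂).aestronglyMeasurable
    (ae_of_all _ (norm_cauchyDiff_le h₁ h₂))

lemma cauchyDiff_ne_zero {w₁ w₂ : ℂ} (hw : w₁ ≠ w₂) (t : ℝ) : cauchyDiff w₁ w₂ t ≠ 0 := by
  rwa [cauchyDiff, sub_ne_zero, one_div, one_div, Ne, inv_inj, sub_right_inj]

noncomputable def halfLineExpDiff (w₁ w₂ : ℂ) : ℝ → ℂ :=
  (Ici 0).indicator fun s => 2 * π * I * (exp (2 * π * I * s * w₁) - exp (2 * π * I * s * w₂))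

lemma re_two_pi_I_mul_neg {w : ℂ} (hw : 0 < w.im) : (2 * π * I * w).re < 0 := by
  simpa using mul_pos two_pi_pos hw

lemma integrableOn_exp_two_pi_I_mul {w : ℂ} (hw : 0 < w.im) :
    IntegrableOn (fun s : ℝ => exp (2 * π * I * s * w)) (Ici 0) := by
  rw [integrableOn_Ici_iff_integrableOn_Ioi]
  simpa only [mul_right_comm _ _ w] using
    integrableOn_exp_mul_complex_Ioi (re_two_pi_I_mul_neg hw) 0

lemma integrable_halfLineExpDiff {w₁ w₂ : ℂ} (h₁ : 0 < w₁.im) (h₂ : 0 < w₂.im) :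
    Integrable (halfLineExpDiff w₁ w₂) :=
  (integrable_indicator_iff measurableSet_Ici).2
    (((integrableOn_exp_two_pi_I_mul h₁).sub (integrableOn_exp_two_pi_I_mul h₂)).const_mul _)

lemma continuous_halfLineExpDiff (w₁ w₂ : ℂ) : Continuous (halfLineExpDiff w₁ w₂) :=
  Continuous.indicator (by simp) (by fun_prop)

lemma fourier_halfLineExpDiff {w₁ w₂ : ℂ} (h₁ : 0 < w₁.im) (h₂ : 0 < w₂.im) :
    𝓕 (halfLineExpDiff w₁ w₂) = cauchyDiff w₁ w₂ := by
  ext ξ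
  have hmul (w : ℂ) (v : ℝ) : exp (↑(-2 * π * v * ξ) * I) * exp (2 * π * I * v * w) =
      exp (2 * π * I * (w - ξ) * v) := by
    rw [← Complex.exp_add]; push_cast; ring_nf
  have hint (w : ℂ) (hw : 0 < w.im) : ∫ v in Ioi (0 : ℝ), exp (2 * π * I * (w - ξ) * v) =
      -(2 * π * I * (w - ξ))⁻¹ := by
    rw [integral_exp_mul_complex_Ioi (re_two_pi_I_mul_neg (by simpa using hw))]
    simp [div_eq_inv_mul]
  have hIoi (w : ℂ) (hw : 0 < w.im) :
      IntegrableOn (fun v : ℝ => exp (2 * π * I * (w - ξ) * v)) (Ioi 0) :=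
    integrableOn_exp_mul_complex_Ioi (re_two_pi_I_mul_neg (by simpa using hw)) 0
  have hintegrand : (fun v : ℝ => exp (↑(-2 * π * v * ξ) * I) • halfLineExpDiff w₁ w₂ v) =
      (Ici 0).indicator fun v : ℝ =>
        2 * π * I * (exp (2 * π * I * (w₁ - ξ) * v) - exp (2 * π * I * (w₂ - ξ) * v)) := by
    ext v
    simp only [halfLineExpDiff, indicator_apply, smul_eq_mul]
    split_ifs
    · rw [← hmul, ← hmul]; ring
    · rw [mul_zero]
  have hne₁ : (ξ : ℂ) - w₁ ≠ 0 := ofReal_sub_ne_zero_of_im_ne_zero h₁.ne' ξ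
  have hne₂ : (ξ : ℂ) - w₂ ≠ 0 := ofReal_sub_ne_zero_of_im_ne_zero h₂.ne' ξ
  have hne₁' : w₁ - ξ ≠ 0 := sub_ne_zero.2 (sub_ne_zero.1 hne₁).symm
  have hne₂' : w₂ - ξ ≠ 0 := sub_ne_zero.2 (sub_ne_zero.1 hne₂).symm
  rw [fourier_real_eq_integral_exp_smul, hintegrand, integral_indicator measurableSet_Ici,
    integral_Ici_eq_integral_Ioi, integral_const_mul, integral_sub (hIoi w₁ h₁) (hIoi w₂ h₂),
    hint w₁ h₁, hint w₂ h₂, cauchyDiff]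
  field_simp
  ring

lemma fourierInv_cauchyDiff {w₁ w₂ : ℂ} (h₁ : 0 < w₁.im) (h₂ : 0 < w₂.im) :
    𝓕⁻ (cauchyDiff w₁ w₂) = halfLineExpDiff w₁ w₂ := by
  rw [← fourier_halfLineExpDiff h₁ h₂]
  refine (continuous_halfLineExpDiff w₁ w₂).fourierInv_fourier_eq
    (integrable_halfLineExpDiff h₁ h₂) ?_
  rw [fourier_halfLineExpDiff h₁ h₂]
  exact integrable_cauchyDiff h₁.ne' h₂.ne'

lemma integral_cauchyDiff_mul_exp {w₁ w₂ : ℂ} (h₁ : 0 < w₁.im) (h₂ : 0 < w₂.im) (a : ℝ) :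
    ∫ t : ℝ, cauchyDiff w₁ w₂ t * exp (I * ((a * t : ℝ) : ℂ)) =
      if 0 ≤ a then 2 * π * I * (exp (I * a * w₁) - exp (I * a * w₂)) else 0 := by
  have h := congrFun (fourierInv_cauchyDiff h₁ h₂) (a / (2 * π))
  simp only [fourierInv_eq', halfLineExpDiff, indicator_apply, mem_Ici,
    le_div_iff₀ two_pi_pos, zero_mul] at h
  have hπ : (π : ℂ) ≠ 0 := ofReal_ne_zero.2 pi_ne_zero
  convert h using 1
  · refine integral_congr_ae (ae_of_all _ fun t => ?_)
    simp only [smul_eq_mul, mul_comm (cauchyDiff w₁ w₂ t), RCLike.inner_apply, conj_trivial]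
    congr 2
    push_cast
    field_simp
  · split_ifs
    · congr 3 <;> push_cast <;> field_simp
    · rfl

lemma integral_cauchyDiff_mul_exp_of_nonneg {w₁ w₂ : ℂ} (h₁ : 0 < w₁.im) (h₂ : 0 < w₂.im)
    {a : ℝ} (ha : 0 ≤ a) : ∫ t : ℝ, cauchyDiff w₁ w₂ t * exp (I * ((a * t : ℝ) : ℂ)) =
      2 * π * I * (exp (I * a * w₁) - exp (I * a * w₂)) := by
  rw [integral_cauchyDiff_mul_exp h₁ h₂, if_pos ha]

lemma integral_cauchyDiff_mul_exp_of_nonpos {w₁ w₂ : ℂ} (h₁ : 0 < w₁.im) (h₂ : 0 < w₂.im)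
    {a : ℝ} (ha : a ≤ 0) : ∫ t : ℝ, cauchyDiff w₁ w₂ t * exp (I * ((a * t : ℝ) : ℂ)) = 0 := by
  rw [integral_cauchyDiff_mul_exp h₁ h₂]
  rcases ha.lt_or_eq with ha | rfl
  · exact if_neg ha.not_ge
  · simp

lemma integral_comp_neg_inv_smul {E : Type*} [NormedAddCommGroup E] [NormedSpace ℝ E]
    (g : ℝ → E) : ∫ u : ℝ, ((u ^ 2)⁻¹ : ℝ) • g (-u⁻¹) = ∫ t : ℝ, g t := by
  have himage : (fun u : ℝ => -u⁻¹) '' {0}ᶜ = {0}ᶜ := by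
    refine (image_subset_iff.2 fun u hu => by simpa using hu).antisymm fun t ht => ?_
    exact ⟨-t⁻¹, by simpa using ht, by simp⟩
  have hderiv (u : ℝ) (hu : u ∈ ({0}ᶜ : Set ℝ)) :
      HasDerivWithinAt (fun u : ℝ => -u⁻¹) (u ^ 2)⁻¹ {0}ᶜ u := by
    have h := (hasDerivAt_inv hu).neg
    rw [neg_neg] at h
    exact h.hasDerivWithinAt
  have hinj : InjOn (fun u : ℝ => -u⁻¹) {0}ᶜ := fun u _ v _ h => by simpa using h
  symm
  calc ∫ t : ℝ, g t = ∫ t in (fun u : ℝ => -u⁻¹) '' {0}ᶜ, g t := by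
        rw [himage, restrict_compl_singleton]
    _ = ∫ u in {0}ᶜ, |(u ^ 2)⁻¹| • g (-u⁻¹) :=
        integral_image_eq_integral_abs_deriv_smul (measurableSet_singleton 0).compl hderiv hinj g
    _ = ∫ u : ℝ, ((u ^ 2)⁻¹ : ℝ) • g (-u⁻¹) := by
        simp only [restrict_compl_singleton, abs_inv, abs_pow, sq_abs]

lemma im_neg_inv_pos {w : ℂ} (hw : 0 < w.im) : 0 < (-w⁻¹).im := by
  have hw0 : w ≠ 0 := fun h => by simp [h] at hw
  simpa [neg_div] using div_pos hw (normSq_pos.2 hw0)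

lemma inv_sq_mul_one_div_neg_inv_sub {w : ℂ} (hw : w.im ≠ 0) {u : ℝ} (hu : u ≠ 0) :
    ((u ^ 2)⁻¹ : ℂ) * (1 / (((-u⁻¹ : ℝ) : ℂ) - w)) = 1 / (u - -w⁻¹) - 1 / u := by
  have hw0 : w ≠ 0 := fun h => by simp [h] at hw
  have hu' : (u : ℂ) ≠ 0 := ofReal_ne_zero.2 hu
  have hlin : (1 : ℂ) + u * w ≠ 0 := fun h => by simpa [hu, hw] using congrArg im h
  have e₁ : ((-u⁻¹ : ℝ) : ℂ) - w = -(1 + u * w) / u := by push_cast; field_simp; ring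
  have e₂ : (u : ℂ) - -w⁻¹ = (1 + u * w) / w := by field_simp; ring
  rw [e₁, e₂]
  field_simp
  ring

lemma inv_sq_smul_cauchyDiff_neg_inv {w₁ w₂ : ℂ} (h₁ : w₁.im ≠ 0) (h₂ : w₂.im ≠ 0) {u : ℝ}
    (hu : u ≠ 0) : ((u ^ 2)⁻¹ : ℝ) • cauchyDiff w₁ w₂ (-u⁻¹) = cauchyDiff (-w₁⁻¹) (-w₂⁻¹) u := by
  rw [cauchyDiff, cauchyDiff, Complex.real_smul, mul_sub, ofReal_inv, ofReal_pow,
    inv_sq_mul_one_div_neg_inv_sub h₁ hu, inv_sq_mul_one_div_neg_inv_sub h₂ hu]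
  ring

lemma integral_cauchyDiff_mul_exp_div {w₁ w₂ : ℂ} (h₁ : 0 < w₁.im) (h₂ : 0 < w₂.im) {c : ℝ}
    (hc : 0 ≤ c) : ∫ t : ℝ, cauchyDiff w₁ w₂ t * exp (I * ((c / t : ℝ) : ℂ)) = 0 := by
  rw [← integral_comp_neg_inv_smul]
  calc _ = ∫ u : ℝ, cauchyDiff (-w₁⁻¹) (-w₂⁻¹) u * exp (I * ((-c * u : ℝ) : ℂ)) := by
        refine integral_congr_ae ((Measure.ae_ne volume 0).mono fun u hu => ?_)
        dsimp only
        rw [← smul_mul_assoc, inv_sq_smul_cauchyDiff_neg_inv h₁.ne' h₂.ne' hu, div_neg,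
          div_inv_eq_mul, neg_mul]
    _ = 0 := integral_cauchyDiff_mul_exp_of_nonpos (im_neg_inv_pos h₁) (im_neg_inv_pos h₂)
        (neg_nonpos.2 hc)

/-- For `z₀` in the upper half-plane, the function
`f(t) = 1/(t − z₀) − 1/(t − 2 − z₀)` is a nonzero integrable function lying in
`H¹₋(ℝ)` which annihilates the exponentials `e^{iπjt}` (by residue calculus the
integral equals `2πi(e^{iπjz₀} − e^{iπj(z₀+2)}) = 0`) and the exponentials
`e^{iπβk/t}` for all integers `j, k ≥ 0`. -/
theorem stmt5 (β : ℝ) (hβ : 0 < β) (z₀ : ℂ) (hz₀ : 0 < z₀.im)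
    (f : ℝ → ℂ) (hf : ∀ t : ℝ, f t = 1 / ((t : ℂ) - z₀) - 1 / ((t : ℂ) - 2 - z₀)) :
    Integrable f ∧ ¬ (f =ᵐ[volume] 0) ∧
    (∀ τ : ℝ, τ < 0 →
      ∫ t : ℝ, f t * Complex.exp (Complex.I * ((π * τ * t : ℝ) : ℂ)) = 0) ∧
    (∀ j : ℤ, 0 ≤ j →
      (∫ t : ℝ, f t * Complex.exp (Complex.I * ((π * j * t : ℝ) : ℂ))) =
        2 * (π : ℂ) * Complex.I *
          (Complex.exp (Complex.I * (π : ℂ) * (j : ℂ) * z₀) -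
           Complex.exp (Complex.I * (π : ℂ) * (j : ℂ) * (z₀ + 2))) ∧
      (∫ t : ℝ, f t * Complex.exp (Complex.I * ((π * j * t : ℝ) : ℂ))) = 0) ∧
    (∀ k : ℤ, 0 ≤ k →
      ∫ t : ℝ, f t * Complex.exp (Complex.I * ((π * β * k / t : ℝ) : ℂ)) = 0) := by
  have h₂ : 0 < (z₀ + 2).im := by simpa using hz₀
  obtain rfl : f = cauchyDiff z₀ (z₀ + 2) :=
    funext fun t => by rw [hf, cauchyDiff, sub_sub, add_comm 2 z₀]
  refine ⟨integrable_cauchyDiff hz₀.ne' h₂.ne', fun h => ?_, fun τ hτ => ?_, fun j hj => ?_,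
    fun k hk => ?_⟩
  · obtain ⟨t, ht⟩ := h.exists
    exact cauchyDiff_ne_zero (by simp) t ht
  · exact integral_cauchyDiff_mul_exp_of_nonpos hz₀ h₂ (mul_neg_of_pos_of_neg pi_pos hτ).le
  · have hformula : ∫ t : ℝ, cauchyDiff z₀ (z₀ + 2) t * exp (I * ((π * j * t : ℝ) : ℂ)) =
        2 * π * I * (exp (I * π * j * z₀) - exp (I * π * j * (z₀ + 2))) := by
      rw [integral_cauchyDiff_mul_exp_of_nonneg hz₀ h₂ (by positivity)]
      push_cast
      ring_nf
    have hperiodic : exp (I * π * j * (z₀ + 2)) = exp (I * π * j * z₀) := by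
      rw [mul_add, Complex.exp_add, show I * π * j * 2 = j * (2 * π * I) by ring,
        exp_int_mul_two_pi_mul_I, mul_one]
    exact ⟨hformula, by rw [hformula, hperiodic, sub_self, mul_zero]⟩
  · exact integral_cauchyDiff_mul_exp_div hz₀ h₂ (by positivity)
end

section
/- Let β > 0. The ℂ-linear subspace of L¹(ℝ;ℂ) (functions identified when equal almost everywhere) consisting of all f such that ∫_ℝ f(t)·exp(iπjt) dt = 0 for every integer j ≥ 0 and ∫_ℝ f(t)·exp(iπβk/t) dt = 0 for every integer k ≥ 0, is infinite-dimensional. -/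
/-!
For `0 < Im w` the function `t ↦ (t + w)⁻²` is the Fourier transform of a function supported
in `(-∞, 0]`, so by Fourier inversion it annihilates every `e^{ibt}` with `b ≥ 0`. The Möbius map
`t ↦ t / (1 + a t)` with `a = 2 / β` turns `πβk / t` into `πβk / t + 2πk`, so it preserves every
`e^{iπβk/t}`, and it pulls `(t + w)⁻² dt` back to `((1 + a w) t + w)⁻² dt`, whose pole is again
in the lower half-plane. Hence `(t + w)⁻² - ((1 + a w) t + w)⁻²` annihilates both families.
For `w = i m`, `m = 1, 2, …`, these functions are linearly independent: a vanishing combination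
extends to a meromorphic function on `ℂ` vanishing on `ℝ`, hence everywhere, while its double
pole at `-i m` has the coefficient of the `m`-th function.
-/

open MeasureTheory Real Set Filter Topology Complex
open scoped FourierTransform

noncomputable section

def doublePole (w z : ℂ) : ℂ := ((z + w) ^ 2)⁻¹

def mobiusPartner (a : ℝ) (w z : ℂ) : ℂ := (((1 + a * w) * z + w) ^ 2)⁻¹

def annihilator (a : ℝ) (w z : ℂ) : ℂ := doublePole w z - mobiusPartner a w z

section DoublePole

variable {w : ℂ}

lemma ofReal_add_ne_zero_of_im_ne_zero (hw : w.im ≠ 0) (t : ℝ) : (t : ℂ) + w ≠ 0 :=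
  fun h => hw <| by simpa using congrArg Complex.im h

lemma continuous_doublePole (hw : w.im ≠ 0) : Continuous fun t : ℝ => doublePole w t :=
  Continuous.inv₀ (by fun_prop) fun t => pow_ne_zero 2 (ofReal_add_ne_zero_of_im_ne_zero hw t)

lemma norm_doublePole (t : ℝ) : ‖doublePole w t‖ = ((t + w.re) ^ 2 + w.im ^ 2)⁻¹ := by
  rw [doublePole, norm_inv, norm_pow, ← normSq_eq_norm_sq, normSq_apply]
  simp [sq]

lemma integrable_doublePole (hw : w.im ≠ 0) : Integrable fun t : ℝ => doublePole w t := by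
  refine (((integrable_inv_one_add_sq.comp_div hw).comp_add_right w.re).const_mul
    (w.im ^ 2)⁻¹).mono' (continuous_doublePole hw).aestronglyMeasurable
    (Eventually.of_forall fun t => (norm_doublePole t).le.trans_eq ?_)
  field_simp
  ring

lemma one_add_ofReal_mul_ne_zero (hw : w.im ≠ 0) (a : ℝ) : 1 + a * w ≠ 0 := by
  intro h
  have hre := congrArg Complex.re h
  have him := congrArg Complex.im h
  simp only [add_re, one_re, re_ofReal_mul, zero_re, add_im, one_im, im_ofReal_mul,
    zero_add, zero_im] at hre him
  rcases mul_eq_zero.1 him with rfl | h'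
  · simp at hre
  · exact hw h'

lemma im_div_one_add_mul_pos (hw : 0 < w.im) (a : ℝ) : 0 < (w / (1 + a * w)).im := by
  rw [div_im]
  have : 0 < normSq (1 + a * w) := normSq_pos.2 (one_add_ofReal_mul_ne_zero hw.ne' a)
  simp only [add_re, one_re, re_ofReal_mul, add_im, one_im, im_ofReal_mul, zero_add]
  rw [← sub_div]
  exact div_pos (by ring_nf; exact hw) this

lemma re_div_one_add_mul_pos (hre : 0 ≤ w.re) (hw : w ≠ 0) {a : ℝ} (ha : 0 < a) :
    0 < (w / (1 + a * w)).re := by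
  rw [div_re]
  simp only [add_re, one_re, re_ofReal_mul, add_im, one_im, im_ofReal_mul, zero_add]
  have hden : 0 < normSq (1 + a * w) := normSq_pos.2 fun h => by
    have := congrArg Complex.re h
    simp at this
    nlinarith
  have hw2 : 0 < w.re ^ 2 + w.im ^ 2 := by
    simpa [normSq_apply, sq] using normSq_pos.2 hw
  rw [← add_div]
  exact div_pos (by nlinarith) hden

lemma mobiusPartner_eq (hw : w.im ≠ 0) (a : ℝ) (z : ℂ) :
    mobiusPartner a w z = ((1 + a * w) ^ 2)⁻¹ * doublePole (w / (1 + a * w)) z := by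
  have := one_add_ofReal_mul_ne_zero hw a
  rw [mobiusPartner, doublePole, ← mul_inv, ← mul_pow]
  congr 2
  field_simp

end DoublePole

section HalfLine

lemma abs_mul_exp_le_of_nonpos {r x : ℝ} (hr : 0 < r) (hx : x ≤ 0) :
    |x| * Real.exp (r * x) ≤ 2 / r * Real.exp (r / 2 * x) := by
  have key : -x ≤ 2 / r * Real.exp (-(r / 2 * x)) := by
    have := Real.add_one_le_exp (-(r / 2 * x))
    rw [div_mul_eq_mul_div, le_div_iff₀ hr]
    nlinarith
  calc |x| * Real.exp (r * x) ≤ 2 / r * Real.exp (-(r / 2 * x)) * Real.exp (r * x) := by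
        rw [abs_of_nonpos hx]; gcongr
    _ = 2 / r * Real.exp (r / 2 * x) := by rw [mul_assoc, ← Real.exp_add]; ring_nf

variable {c : ℂ}

lemma norm_ofReal_mul_cexp_le (hc : 0 < c.re) {x : ℝ} (hx : x ≤ 0) :
    ‖(x : ℂ) * cexp (c * x)‖ ≤ 2 / c.re * Real.exp (c.re / 2 * x) := by
  rw [norm_mul, norm_real, Real.norm_eq_abs, norm_exp, re_mul_ofReal]
  exact abs_mul_exp_le_of_nonpos hc hx

lemma integrableOn_ofReal_mul_cexp_Iic (hc : 0 < c.re) :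
    IntegrableOn (fun x : ℝ => (x : ℂ) * cexp (c * x)) (Iic 0) := by
  refine ((integrableOn_exp_mul_Iic (half_pos hc) 0).const_mul (2 / c.re)).mono'
    (by fun_prop) ?_
  filter_upwards [self_mem_ae_restrict measurableSet_Iic] with x hx
  exact norm_ofReal_mul_cexp_le hc hx

lemma tendsto_ofReal_mul_cexp_atBot (hc : 0 < c.re) :
    Tendsto (fun x : ℝ => (x : ℂ) * cexp (c * x)) atBot (𝓝 0) := by
  have hexp : Tendsto (fun x : ℝ => 2 / c.re * Real.exp (c.re / 2 * x)) atBot (𝓝 0) := by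
    simpa using (Real.tendsto_exp_atBot.comp
      (tendsto_id.const_mul_atBot (half_pos hc))).const_mul (2 / c.re)
  refine squeeze_zero_norm' ?_ hexp
  filter_upwards [Iic_mem_atBot 0] with x hx
  exact norm_ofReal_mul_cexp_le hc hx

lemma integral_ofReal_mul_cexp_Iic (hc : 0 < c.re) :
    ∫ x in Iic (0 : ℝ), (x : ℂ) * cexp (c * x) = -(c ^ 2)⁻¹ := by
  have hc0 : c ≠ 0 := fun h => by simp [h] at hc
  have hderiv (x : ℝ) : HasDerivAt (fun y : ℝ => ((y : ℂ) / c - (c ^ 2)⁻¹) * cexp (c * y))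
      ((x : ℂ) * cexp (c * x)) x := by
    have h := (((hasDerivAt_id (x : ℂ)).div_const c).sub_const (c ^ 2)⁻¹).mul
      (((hasDerivAt_id (x : ℂ)).const_mul c).cexp)
    refine h.comp_ofReal.congr_deriv ?_
    simp only [id]
    field_simp
    ring
  have hlim : Tendsto (fun y : ℝ => ((y : ℂ) / c - (c ^ 2)⁻¹) * cexp (c * y)) atBot (𝓝 0) := by
    have hexp : Tendsto (fun y : ℝ => cexp (c * y)) atBot (𝓝 0) := by
      rw [tendsto_exp_nhds_zero_iff]
      simpa using (tendsto_id.const_mul_atBot hc)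
    simpa [sub_mul, div_mul_eq_mul_div] using
      ((tendsto_ofReal_mul_cexp_atBot hc).div_const c).sub (hexp.const_mul (c ^ 2)⁻¹)
  rw [integral_Iic_of_hasDerivAt_of_tendsto (by fun_prop) (fun x _ => hderiv x)
    (integrableOn_ofReal_mul_cexp_Iic hc) hlim]
  simp

end HalfLine

section Fourier

variable {w : ℂ}

def doublePoleFourierPreimage (w : ℂ) : ℝ → ℂ :=
  indicator (Iic 0) fun u => 4 * π ^ 2 * (u * cexp (-2 * π * I * w * u))

lemma re_neg_two_pi_I_mul (z : ℂ) : (-2 * π * I * z).re = 2 * π * z.im := by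
  simp

lemma continuous_doublePoleFourierPreimage :
    Continuous (doublePoleFourierPreimage w) :=
  continuous_indicator (by simp) (by fun_prop)

lemma integrable_doublePoleFourierPreimage (hw : 0 < w.im) :
    Integrable (doublePoleFourierPreimage w) := by
  refine (integrable_indicator_iff measurableSet_Iic).2
    ((integrableOn_ofReal_mul_cexp_Iic ?_).const_mul _)
  rw [re_neg_two_pi_I_mul]
  positivity

lemma doublePoleFourierPreimage_of_nonneg {u : ℝ} (hu : 0 ≤ u) :
    doublePoleFourierPreimage w u = 0 := by
  rcases hu.eq_or_lt with rfl | hu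
  · simp [doublePoleFourierPreimage]
  · simp [doublePoleFourierPreimage, hu]

lemma fourier_doublePoleFourierPreimage (hw : 0 < w.im) :
    𝓕 (doublePoleFourierPreimage w) = fun t : ℝ => doublePole w t := by
  ext t
  set c := -2 * π * I * (t + w)
  have hc : 0 < c.re := by rw [re_neg_two_pi_I_mul]; simp; positivity
  have hint : (fun v : ℝ => cexp (↑(-2 * π * v * t) * I) • doublePoleFourierPreimage w v) =
      indicator (Iic 0) fun v : ℝ => 4 * π ^ 2 * (v * cexp (c * v)) := by
    ext v
    simp only [doublePoleFourierPreimage, smul_eq_mul, indicator, mem_Iic]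
    split_ifs
    · rw [mul_left_comm, mul_left_comm _ (v : ℂ), ← Complex.exp_add]
      congr 3
      push_cast
      ring
    · simp
  rw [Real.fourier_real_eq_integral_exp_smul, hint, integral_indicator measurableSet_Iic,
    integral_const_mul, integral_ofReal_mul_cexp_Iic hc, doublePole]
  have := ofReal_add_ne_zero_of_im_ne_zero hw.ne' t
  have : (π : ℂ) ≠ 0 := by exact_mod_cast pi_ne_zero
  simp only [c]
  field_simp
  linear_combination -4 * I_sq

lemma integral_doublePole_mul_cexp_eq_zero (hw : 0 < w.im) {b : ℝ} (hb : 0 ≤ b) :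
    ∫ t : ℝ, doublePole w t * cexp (I * ((b * t : ℝ) : ℂ)) = 0 := by
  have hF := fourier_doublePoleFourierPreimage hw
  have hinv := (integrable_doublePoleFourierPreimage hw).fourierInv_fourier_eq
    (hF ▸ integrable_doublePole hw.ne') (continuous_doublePoleFourierPreimage.continuousAt
      (x := b / (2 * π)))
  rw [hF, Real.fourierInv_eq_fourier_neg, Real.fourier_real_eq_integral_exp_smul,
    doublePoleFourierPreimage_of_nonneg (by positivity)] at hinv
  rw [← hinv]
  congr 1 with t
  rw [smul_eq_mul, mul_comm]
  congr 2
  field_simp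

end Fourier

section Mobius

variable {a : ℝ}

lemma ae_one_add_mul_ne_zero (a : ℝ) : ∀ᵐ x : ℝ, 1 + a * x ≠ 0 := by
  refine ae_iff.2 (measure_mono_null (fun x hx => ?_) (measure_singleton (-a⁻¹)))
  have hx : 1 + a * x = 0 := not_not.1 hx
  have ha : a ≠ 0 := by rintro rfl; simp at hx
  rw [mem_singleton_iff]
  field_simp
  linarith

lemma hasDerivAt_div_one_add_mul {x : ℝ} (hx : 1 + a * x ≠ 0) :
    HasDerivAt (fun y => y / (1 + a * y)) ((1 + a * x) ^ 2)⁻¹ x := by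
  refine ((hasDerivAt_id' x).div ((hasDerivAt_id' x).const_mul a |>.const_add 1) hx).congr_deriv ?_
  field_simp
  ring

lemma injOn_div_one_add_mul (a : ℝ) :
    InjOn (fun y => y / (1 + a * y)) {x | 1 + a * x ≠ 0} := by
  intro x hx y hy hxy
  rw [div_eq_div_iff hx hy] at hxy
  linear_combination hxy

lemma subset_image_div_one_add_mul (a : ℝ) :
    {y | 1 + -a * y ≠ 0} ⊆ (fun y => y / (1 + a * y)) '' {x | 1 + a * x ≠ 0} := by
  intro y hy
  replace hy : 1 - a * y ≠ 0 := by simpa [sub_eq_add_neg] using hy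
  have hinv : 1 + a * (y / (1 - a * y)) = 1 / (1 - a * y) := by
    field_simp
    ring
  refine ⟨y / (1 - a * y), ?_, ?_⟩
  · simpa [hinv] using hy
  · simp only [hinv, div_div_div_cancel_right₀ hy, div_one]

lemma integral_comp_div_one_add_mul {E : Type*} [NormedAddCommGroup E] [NormedSpace ℝ E]
    (a : ℝ) (g : ℝ → E) :
    ∫ t, g t = ∫ x, ((1 + a * x) ^ 2)⁻¹ • g (x / (1 + a * x)) := by
  have hs : MeasurableSet {x : ℝ | 1 + a * x ≠ 0} :=
    measurableSet_eq_fun (by fun_prop) measurable_const |>.compl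
  have hdom : {x : ℝ | 1 + a * x ≠ 0} =ᵐ[volume] univ :=
    ae_eq_univ.2 (ae_iff.1 (ae_one_add_mul_ne_zero a))
  have himage : (fun y => y / (1 + a * y)) '' {x | 1 + a * x ≠ 0} =ᵐ[volume] univ :=
    ae_eq_univ.2 (measure_mono_null (compl_subset_compl.2 (subset_image_div_one_add_mul a))
      (ae_iff.1 (ae_one_add_mul_ne_zero (-a))))
  rw [← setIntegral_univ, ← setIntegral_congr_set himage,
    integral_image_eq_integral_abs_deriv_smul hs
      (fun x hx => (hasDerivAt_div_one_add_mul hx).hasDerivWithinAt) (injOn_div_one_add_mul a),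
    setIntegral_congr_set hdom, setIntegral_univ]
  congr with x
  rw [abs_of_nonneg (by positivity)]

end Mobius

section Annihilation

variable {w : ℂ} {a : ℝ}

lemma integrable_mobiusPartner (hw : 0 < w.im) (a : ℝ) :
    Integrable fun t : ℝ => mobiusPartner a w t := by
  simp only [mobiusPartner_eq hw.ne']
  exact (integrable_doublePole (im_div_one_add_mul_pos hw a).ne').const_mul _

lemma integrable_annihilator (hw : 0 < w.im) (a : ℝ) :
    Integrable fun t : ℝ => annihilator a w t :=
  (integrable_doublePole hw.ne').sub (integrable_mobiusPartner hw a)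

lemma continuous_annihilator (hw : 0 < w.im) (a : ℝ) :
    Continuous fun t : ℝ => annihilator a w t := by
  simp only [annihilator, mobiusPartner_eq hw.ne']
  exact (continuous_doublePole hw.ne').sub
    (continuous_const.mul (continuous_doublePole (im_div_one_add_mul_pos hw a).ne'))

lemma doublePole_comp_div_one_add_mul {x : ℝ} (hx : 1 + a * x ≠ 0) :
    ((((1 + a * x) ^ 2)⁻¹ : ℝ) : ℂ) * doublePole w ((x / (1 + a * x) : ℝ) : ℂ) =
      mobiusPartner a w x := by
  have hx' : (1 + a * x : ℂ) ≠ 0 := by exact_mod_cast hx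
  rw [doublePole, mobiusPartner]
  push_cast
  rw [← mul_inv, ← mul_pow]
  congr 2
  field_simp
  ring

lemma integral_doublePole_mul_eq_integral_mobiusPartner_mul {φ : ℝ → ℂ}
    (hφ : ∀ x, 1 + a * x ≠ 0 → φ (x / (1 + a * x)) = φ x) :
    ∫ t : ℝ, doublePole w t * φ t = ∫ t : ℝ, mobiusPartner a w t * φ t := by
  rw [integral_comp_div_one_add_mul a]
  refine integral_congr_ae ((ae_one_add_mul_ne_zero a).mono fun x hx => ?_)
  simp only [real_smul, hφ x hx, ← mul_assoc, doublePole_comp_div_one_add_mul hx]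

variable {φ : ℝ → ℂ} {C : ℝ}

lemma integral_annihilator_mul (hw : 0 < w.im) (hφ : AEStronglyMeasurable φ)
    (hφC : ∀ᵐ t, ‖φ t‖ ≤ C) :
    ∫ t : ℝ, annihilator a w t * φ t =
      (∫ t : ℝ, doublePole w t * φ t) - ∫ t : ℝ, mobiusPartner a w t * φ t := by
  simp only [annihilator, sub_mul]
  exact integral_sub ((integrable_doublePole hw.ne').mul_bdd hφ hφC)
    ((integrable_mobiusPartner hw a).mul_bdd hφ hφC)

lemma integral_annihilator_mul_cexp_eq_zero (hw : 0 < w.im) (a : ℝ) {b : ℝ} (hb : 0 ≤ b) :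
    ∫ t : ℝ, annihilator a w t * cexp (I * ((b * t : ℝ) : ℂ)) = 0 := by
  rw [integral_annihilator_mul hw (by fun_prop)
    (Eventually.of_forall fun t => (norm_exp_I_mul_ofReal _).le)]
  simp only [mobiusPartner_eq hw.ne', mul_assoc]
  rw [integral_const_mul, integral_doublePole_mul_cexp_eq_zero hw hb,
    integral_doublePole_mul_cexp_eq_zero (im_div_one_add_mul_pos hw a) hb, mul_zero, sub_zero]

lemma integral_annihilator_mul_eq_zero_of_mobius_invariant (hw : 0 < w.im)
    (hφ : AEStronglyMeasurable φ) (hφC : ∀ᵐ t, ‖φ t‖ ≤ C)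
    (hφa : ∀ x, 1 + a * x ≠ 0 → φ (x / (1 + a * x)) = φ x) :
    ∫ t : ℝ, annihilator a w t * φ t = 0 := by
  rw [integral_annihilator_mul hw hφ hφC,
    integral_doublePole_mul_eq_integral_mobiusPartner_mul hφa, sub_self]

end Annihilation

section Independence

lemma differentiableAt_doublePole {w z : ℂ} (hz : z + w ≠ 0) :
    DifferentiableAt ℂ (doublePole w) z :=
  ((differentiableAt_id.add_const w).pow 2).inv (pow_ne_zero 2 hz)

lemma differentiableAt_mobiusPartner {w z : ℂ} (hw : w.im ≠ 0) (a : ℝ)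
    (hz : z + w / (1 + a * w) ≠ 0) : DifferentiableAt ℂ (mobiusPartner a w) z := by
  simp only [funext (mobiusPartner_eq hw a)]
  exact (differentiableAt_doublePole hz).const_mul _

lemma eqOn_zero_of_forall_ofReal_eq_zero {S : Set ℂ} (hS : S.Finite) (h0 : (0 : ℂ) ∉ S)
    {Φ : ℂ → ℂ} (hΦ : DifferentiableOn ℂ Φ Sᶜ) (hℝ : ∀ t : ℝ, Φ t = 0) : EqOn Φ 0 Sᶜ := by
  have hconn : IsPreconnected Sᶜ := (hS.countable.isConnected_compl_of_one_lt_rank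
    (by simp [Complex.rank_real_complex])).isPreconnected
  have hreal : Tendsto ((↑) : ℝ → ℂ) (𝓝[≠] 0) (𝓝[≠] 0) := by
    simpa using continuous_ofReal.continuousWithinAt.tendsto_nhdsWithin
      (x := 0) (t := {0}ᶜ) fun t ht => by simpa using ht
  exact (hΦ.analyticOnNhd hS.isClosed.isOpen_compl).eqOn_zero_of_preconnected_of_frequently_eq_zero
    hconn h0 (hreal.frequently (Frequently.of_forall hℝ))

lemma eq_zero_of_eventually_mul_inv_sq_add_eq_zero {p c : ℂ} {u : ℂ → ℂ} (hu : ContinuousAt u p)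
    (h : ∀ᶠ z in 𝓝[≠] p, c * ((z - p) ^ 2)⁻¹ + u z = 0) : c = 0 := by
  have hlim : Tendsto (fun z => c + (z - p) ^ 2 * u z) (𝓝[≠] p) (𝓝 c) := by
    have : ContinuousAt (fun z => c + (z - p) ^ 2 * u z) p := by fun_prop
    simpa using this.tendsto.mono_left nhdsWithin_le_nhds
  refine tendsto_nhds_unique hlim (tendsto_const_nhds.congr' ?_)
  filter_upwards [h, self_mem_nhdsWithin] with z hz hzp
  have : z - p ≠ 0 := sub_ne_zero.2 hzp
  calc 0 = (z - p) ^ 2 * (c * ((z - p) ^ 2)⁻¹ + u z) := by rw [hz, mul_zero]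
    _ = c + (z - p) ^ 2 * u z := by field_simp

variable {ι : Type*} [Fintype ι] {a : ℝ} {w : ι → ℂ} {c : ι → ℂ}

lemma eventually_cofinite_sum_annihilator_eq_zero (hw : ∀ i, 0 < (w i).im)
    (h : ∀ t : ℝ, ∑ i, c i * annihilator a (w i) t = 0) :
    ∀ᶠ z in cofinite, ∑ i, c i * annihilator a (w i) z = 0 := by
  set S := range (fun i => -w i) ∪ range (fun i => -(w i / (1 + a * w i)))
  have hS : S.Finite := (finite_range _).union (finite_range _)
  refine eventually_of_mem hS.compl_mem_cofinite
    (eqOn_zero_of_forall_ofReal_eq_zero hS (fun h0 => ?_) (fun z hz => ?_) h)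
  · rcases h0 with ⟨i, hi⟩ | ⟨i, hi⟩
    · exact (hw i).ne' (by simp [neg_eq_zero.1 hi])
    · exact (im_div_one_add_mul_pos (hw i) a).ne' (by simp [neg_eq_zero.1 hi])
  · refine (DifferentiableAt.fun_sum fun i _ => ((differentiableAt_doublePole fun h' => ?_).sub
      (differentiableAt_mobiusPartner (hw i).ne' a fun h' => ?_)).const_mul
        (c i)).differentiableWithinAt
    · exact hz (Or.inl ⟨i, neg_eq_of_add_eq_zero_left h'⟩)
    · exact hz (Or.inr ⟨i, neg_eq_of_add_eq_zero_left h'⟩)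

lemma eq_zero_of_forall_sum_annihilator_I_mul_eq_zero [DecidableEq ι] (ha : 0 < a) {m : ι → ℝ}
    (hm : Function.Injective m) (hm0 : ∀ i, 0 < m i)
    (h : ∀ t : ℝ, ∑ i, c i * annihilator a (I * m i) t = 0) (i₀ : ι) : c i₀ = 0 := by
  have hw (i : ι) : 0 < (I * m i).im := by simpa using hm0 i
  have hzero := eventually_cofinite_sum_annihilator_eq_zero hw h
  set p := -(I * m i₀)
  -- The other poles miss `p`: the `-(I * m i)` with `i ≠ i₀` by injectivity of `m`, those of
  -- the Möbius partners because their real part is nonzero.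
  refine eq_zero_of_eventually_mul_inv_sq_add_eq_zero (p := p)
    (u := fun z => ∑ i ∈ Finset.univ.erase i₀, c i * doublePole (I * m i) z -
      ∑ i, c i * mobiusPartner a (I * m i) z) ?_ ?_
  · refine ((DifferentiableAt.fun_sum fun i hi =>
      (differentiableAt_doublePole fun h' => Finset.ne_of_mem_erase hi (hm ?_)).const_mul
        (c i)).sub (DifferentiableAt.fun_sum fun i _ =>
      (differentiableAt_mobiusPartner (hw i).ne' a fun h' => ?_).const_mul (c i))).continuousAt
    · have := congrArg im h'
      simp only [p, add_im, neg_im, mul_im, I_re, I_im, ofReal_re, ofReal_im, zero_im] at this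
      linarith
    · refine (re_div_one_add_mul_pos (by simp)
        (mul_ne_zero I_ne_zero (ofReal_ne_zero.2 (hm0 i).ne')) ha).ne' ?_
      simpa [p] using congrArg re h'
  · filter_upwards [nhdsNE_le_cofinite p hzero] with z hz
    refine Eq.trans ?_ hz
    simp only [annihilator, mul_sub, Finset.sum_sub_distrib,
      ← Finset.add_sum_erase _ _ (Finset.mem_univ i₀), doublePole, p, sub_neg_eq_add]
    ring

end Independence

lemma cexp_I_mul_div_comp_div_one_add_mul {β : ℝ} (hβ : β ≠ 0) (k : ℤ) {x : ℝ}
    (hx : 1 + 2 / β * x ≠ 0) :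
    cexp (I * ((π * β * k / (x / (1 + 2 / β * x)) : ℝ) : ℂ)) =
      cexp (I * ((π * β * k / x : ℝ) : ℂ)) := by
  rcases eq_or_ne x 0 with rfl | hx0
  · simp
  have : π * β * k / (x / (1 + 2 / β * x)) = π * β * k / x + k * (2 * π) := by
    field_simp
  rw [this, ofReal_add, mul_add, Complex.exp_add]
  push_cast
  rw [show I * (k * (2 * π)) = k * (2 * π * I) by ring, exp_int_mul_two_pi_mul_I, mul_one]

/-- The subspace of `L¹(ℝ)` (functions modulo a.e. equality) annihilating the
exponentials `e^{iπjt}` and `e^{iπβk/t}`, `j, k = 0, 1, 2, …`, is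
infinite-dimensional: for every `n` there are `n` such functions that are
linearly independent modulo null sets. -/
theorem stmt6 (β : ℝ) (hβ : 0 < β) :
    ∀ n : ℕ, ∃ f : Fin n → ℝ → ℂ,
      (∀ i, Integrable (f i)) ∧
      (∀ i, ∀ j : ℤ, 0 ≤ j →
        ∫ t : ℝ, f i t * Complex.exp (Complex.I * ((π * j * t : ℝ) : ℂ)) = 0) ∧
      (∀ i, ∀ k : ℤ, 0 ≤ k →
        ∫ t : ℝ, f i t * Complex.exp (Complex.I * ((π * β * k / t : ℝ) : ℂ)) = 0) ∧
      (∀ c : Fin n → ℂ,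
        (fun t => ∑ i, c i * f i t) =ᵐ[volume] 0 → ∀ i, c i = 0) := by
  intro n
  set w : Fin n → ℂ := fun i => I * ((i : ℕ) + 1 : ℝ)
  have hw (i : Fin n) : 0 < (w i).im := by simp [w]; positivity
  refine ⟨fun i t => annihilator (2 / β) (w i) t, fun i => integrable_annihilator (hw i) _,
    fun i j hj => integral_annihilator_mul_cexp_eq_zero (hw i) _ (by positivity),
    fun i k _ => ?_, fun c hc => ?_⟩
  · exact integral_annihilator_mul_eq_zero_of_mobius_invariant (hw i) (by fun_prop)
      (Eventually.of_forall fun t => (norm_exp_I_mul_ofReal _).le)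
      fun x hx => cexp_I_mul_div_comp_div_one_add_mul hβ.ne' k hx
  · have hcont : Continuous fun t : ℝ => ∑ i, c i * annihilator (2 / β) (w i) t :=
      continuous_finsetSum _ fun i _ => continuous_const.mul (continuous_annihilator (hw i) _)
    refine eq_zero_of_forall_sum_annihilator_I_mul_eq_zero (by positivity)
      (m := fun i : Fin n => ((i : ℕ) + 1 : ℝ)) (fun i j h => Fin.ext (by simpa using h))
      (fun i => by positivity)
      (congrFun ((hcont.ae_eq_iff_eq volume continuous_const).1 hc))
end
end

section
/- Define g : (0,∞) → ℝ by g(t) = 1/(1+t) for 0 < t < 1 and g(t) = −1/(t(1+t)) for t ≥ 1. Then g ∈ L¹((0,∞);ℝ), g is not zero almost everywhere, and for every j, k ∈ ℤ one has ∫₀^∞ g(t)·exp(2πijt) dt = 0 and ∫₀^∞ g(t)·exp(2πik/t) dt = 0. -/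
/-!
For `0 < x < 1` the periodisation of the defect density vanishes: `g x = 1 / (1 + x)`, while for
`n ≥ 1` one has `g (x + n) = 1 / (x + n + 1) - 1 / (x + n)`, so `∑_{n ≥ 1} g (x + n)` telescopes
to `-1 / (1 + x)`. Folding `(0, ∞)` onto `(0, 1]` therefore kills `∫ g φ` for every continuous
`1`-periodic `φ`, in particular for `e^{2πijt}`. The symmetry `t⁻² g (t⁻¹) = -g t` makes the
substitution `t ↦ t⁻¹` turn `∫ g(t) e^{2πik/t} dt` into `-∫ g(t) e^{2πikt} dt = 0`.
-/

open MeasureTheory Real Set Filter Function Topology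

variable {E : Type*} [NormedAddCommGroup E] [NormedSpace ℝ E]

theorem integral_eq_integral_Ioc_tsum_add_int {f : ℝ → E} (hf : Integrable f) :
    ∫ x, f x = ∫ x in Ioc 0 1, ∑' n : ℤ, f (x + n) := by
  have hsum := hf.hasSum_intervalIntegral_comp_add_int
  have hnorm := hf.norm.hasSum_intervalIntegral_comp_add_int
  simp only [intervalIntegral.integral_of_le zero_le_one] at hsum hnorm
  rw [← hsum.tsum_eq, integral_tsum_of_summable_integral_norm (F := fun (n : ℤ) x => f (x + n))
    (fun n => (hf.comp_add_right (n : ℝ)).integrableOn) hnorm.summable]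

theorem integral_smul_periodic_eq_zero {g : ℝ → ℝ} {φ : ℝ → E} (hg : Integrable g)
    (hφ : Periodic φ 1) (hφc : Continuous φ)
    (hsum : ∀ᵐ x ∂volume.restrict (Ioc 0 1), HasSum (fun n : ℤ => g (x + n)) 0) :
    ∫ x, g x • φ x = 0 := by
  obtain ⟨C, hC⟩ :=
    isBounded_iff_forall_norm_le.1 (hφ.isBounded_of_continuous one_ne_zero hφc)
  have hgφ : Integrable fun x => g x • φ x :=
    hg.smul_bdd C hφc.aestronglyMeasurable (ae_of_all _ fun x => hC _ (mem_range_self x))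
  rw [integral_eq_integral_Ioc_tsum_add_int hgφ]
  refine integral_eq_zero_of_ae ?_
  filter_upwards [hsum] with x hx
  have hshift : ∀ n : ℤ, φ (x + n) = φ x := fun n => by
    simpa using hφ.int_mul n x
  simp only [hshift]
  simpa using (hx.smul_const (φ x)).tsum_eq

theorem setIntegral_Ioi_smul_periodic_eq_zero {g : ℝ → ℝ} {φ : ℝ → E}
    (hg : IntegrableOn g (Ioi 0)) (hφ : Periodic φ 1) (hφc : Continuous φ)
    (hsum : ∀ᵐ x ∂volume.restrict (Ioc 0 1), HasSum (fun n : ℕ => g (x + n)) 0) :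
    ∫ x in Ioi 0, g x • φ x = 0 := by
  rw [← integral_indicator measurableSet_Ioi,
    funext (indicator_smul_apply_left (Ioi 0) g φ)]
  refine integral_smul_periodic_eq_zero
    ((integrable_indicator_iff measurableSet_Ioi).2 hg) hφ hφc ?_
  filter_upwards [hsum, ae_restrict_mem measurableSet_Ioc] with x hx hxI
  have hnat : HasSum (fun n : ℕ => (Ioi 0).indicator g (x + ((n : ℤ) : ℝ))) 0 := by
    refine hx.congr_fun fun n => ?_
    rw [Int.cast_natCast, indicator_of_mem]
    exact add_pos_of_pos_of_nonneg hxI.1 n.cast_nonneg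
  have hneg :
      HasSum (fun n : ℕ => (Ioi 0).indicator g (x + ((-((n : ℤ) + 1) : ℤ) : ℝ))) 0 := by
    refine hasSum_zero.congr_fun fun n => indicator_of_notMem ?_ g
    rw [mem_Ioi, not_lt]
    push_cast
    linarith [hxI.2, (n.cast_nonneg : (0 : ℝ) ≤ n)]
  simpa only [add_zero] using
    HasSum.of_nat_of_neg_add_one (f := fun n : ℤ => (Ioi 0).indicator g (x + n)) hnat hneg

theorem setIntegral_Ioi_comp_inv (f : ℝ → E) :
    ∫ x in Ioi 0, (x ^ 2)⁻¹ • f x⁻¹ = ∫ x in Ioi 0, f x := by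
  rw [← integral_comp_rpow_Ioi f (p := -1) (by norm_num)]
  refine setIntegral_congr_fun measurableSet_Ioi fun x hx => ?_
  rw [rpow_neg_one, show (-1 : ℝ) - 1 = -2 by norm_num, rpow_neg (le_of_lt hx), abs_neg, abs_one,
    one_mul, ← rpow_natCast, Nat.cast_ofNat]

theorem setIntegral_Ioi_smul_comp_inv_eq_neg {g : ℝ → ℝ} (φ : ℝ → E)
    (hg : ∀ᵐ x ∂volume.restrict (Ioi 0), g x⁻¹ = -(x ^ 2 * g x)) :
    ∫ x in Ioi 0, g x • φ x⁻¹ = -∫ x in Ioi 0, g x • φ x := by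
  rw [← setIntegral_Ioi_comp_inv, ← integral_neg]
  refine integral_congr_ae ?_
  filter_upwards [hg, ae_restrict_mem measurableSet_Ioi] with x hx hx0
  rw [inv_inv, hx, smul_smul, ← neg_smul, ← neg_mul_eq_mul_neg,
    inv_mul_cancel_left₀ (pow_ne_zero 2 hx0.ne')]

theorem Antitone.hasSum_sub_succ {a : ℕ → ℝ} {l : ℝ} (ha : Antitone a)
    (hl : Tendsto a atTop (𝓝 l)) : HasSum (fun n => a n - a (n + 1)) (a 0 - l) := by
  refine (hasSum_iff_tendsto_nat_of_nonneg (fun n => sub_nonneg.2 (ha n.le_succ)) _).2 ?_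
  simp only [Finset.sum_range_sub']
  exact tendsto_const_nhds.sub hl

theorem periodic_exp_two_pi_int_mul_I (j : ℤ) :
    Periodic (fun t : ℝ => Complex.exp (Complex.I * ((2 * π * j * t : ℝ) : ℂ))) 1 := fun t => by
  have harg : Complex.I * ((2 * π * j * (t + 1) : ℝ) : ℂ)
      = Complex.I * ((2 * π * j * t : ℝ) : ℂ) + j * (2 * π * Complex.I) := by
    push_cast; ring
  simp only [harg, Complex.exp_add, Complex.exp_int_mul_two_pi_mul_I, mul_one]

noncomputable def defectDensity (t : ℝ) : ℝ :=
  if t < 1 then 1 / (1 + t) else -(1 / (t * (1 + t)))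

theorem measurable_defectDensity : Measurable defectDensity :=
  Measurable.ite measurableSet_Iio (by fun_prop) (by fun_prop)

theorem abs_defectDensity_le {t : ℝ} (ht : 0 < t) : |defectDensity t| ≤ 2 * (1 + t ^ 2)⁻¹ := by
  rw [← div_eq_mul_inv, le_div_iff₀ (by positivity), defectDensity]
  split_ifs with h
  · rw [abs_of_pos (by positivity), div_mul_eq_mul_div, div_le_iff₀ (by positivity)]
    nlinarith
  · rw [abs_neg, abs_of_pos (by positivity), div_mul_eq_mul_div, div_le_iff₀ (by positivity)]
    nlinarith

theorem integrableOn_defectDensity : IntegrableOn defectDensity (Ioi 0) := by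
  refine (integrable_inv_one_add_sq.const_mul 2).integrableOn.mono'
    measurable_defectDensity.aestronglyMeasurable ?_
  filter_upwards [ae_restrict_mem measurableSet_Ioi] with t ht
  exact abs_defectDensity_le ht

theorem defectDensity_pos {t : ℝ} (ht0 : 0 < t) (ht1 : t < 1) : 0 < defectDensity t := by
  rw [defectDensity, if_pos ht1]
  positivity

theorem not_defectDensity_ae_eq_zero : ¬ defectDensity =ᵐ[volume.restrict (Ioi 0)] 0 := by
  intro h
  have hfalse : ∀ᵐ t ∂volume.restrict (Ioo (0 : ℝ) 1), False := by
    filter_upwards [ae_restrict_of_ae_restrict_of_subset Ioo_subset_Ioi_self h,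
      ae_restrict_mem measurableSet_Ioo] with t ht hmem
    exact (defectDensity_pos hmem.1 hmem.2).ne' ht
  rw [Filter.eventually_false_iff_eq_bot, ae_eq_bot, Measure.restrict_eq_zero, volume_Ioo] at hfalse
  norm_num at hfalse

theorem hasSum_defectDensity_add_nat {x : ℝ} (hx0 : 0 < x) (hx1 : x < 1) :
    HasSum (fun n : ℕ => defectDensity (x + n)) 0 := by
  set b : ℕ → ℝ := fun n => (x + 1 + n)⁻¹
  have hb : HasSum (fun n => b n - b (n + 1)) (b 0 - 0) := by
    refine Antitone.hasSum_sub_succ (fun m n hmn => ?_) ?_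
    · exact inv_anti₀ (by positivity) (by simp only [add_le_add_iff_left, Nat.cast_le, hmn])
    · exact tendsto_inv_atTop_zero.comp
        (tendsto_atTop_add_const_left _ _ tendsto_natCast_atTop_atTop)
  have htail : ∀ n : ℕ, defectDensity (x + (n + 1 : ℕ)) = -(b n - b (n + 1)) := fun n => by
    have h1 : 0 < x + 1 + n := by positivity
    rw [defectDensity, if_neg (by push_cast; linarith [(n.cast_nonneg : (0 : ℝ) ≤ n)])]
    simp only [b]
    push_cast
    field_simp
    ring
  rw [← hasSum_nat_add_iff' 1, Finset.sum_range_one, Nat.cast_zero, add_zero, defectDensity,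
    if_pos hx1, zero_sub]
  convert hb.neg using 1
  · exact funext htail
  · simp [b, add_comm]

theorem defectDensity_inv {x : ℝ} (hx : 0 < x) (hx1 : x ≠ 1) :
    defectDensity x⁻¹ = -(x ^ 2 * defectDensity x) := by
  rcases hx1.lt_or_gt with h | h
  · rw [defectDensity, defectDensity, if_neg (not_lt.2 (one_le_inv₀ hx |>.2 h.le)), if_pos h]
    field_simp
    ring
  · rw [defectDensity, defectDensity, if_pos (inv_lt_one₀ hx |>.2 h), if_neg (not_lt.2 h.le)]
    field_simp
    ring

theorem setIntegral_defectDensity_smul_periodic {φ : ℝ → E}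
    (hφ : Periodic φ 1) (hφc : Continuous φ) : ∫ x in Ioi 0, defectDensity x • φ x = 0 := by
  refine setIntegral_Ioi_smul_periodic_eq_zero integrableOn_defectDensity hφ hφc ?_
  rw [Measure.restrict_congr_set Ioo_ae_eq_Ioc.symm]
  exact ae_restrict_of_forall_mem measurableSet_Ioo fun x hx =>
    hasSum_defectDensity_add_nat hx.1 hx.2

theorem setIntegral_defectDensity_smul_periodic_comp_inv {φ : ℝ → E}
    (hφ : Periodic φ 1) (hφc : Continuous φ) : ∫ x in Ioi 0, defectDensity x • φ x⁻¹ = 0 := by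
  have hinv : ∀ᵐ x ∂volume.restrict (Ioi 0), defectDensity x⁻¹ = -(x ^ 2 * defectDensity x) := by
    filter_upwards [ae_restrict_mem measurableSet_Ioi, ae_restrict_of_ae (Measure.ae_ne volume 1)]
      with x hx0 hx1
    exact defectDensity_inv hx0 hx1
  rw [setIntegral_Ioi_smul_comp_inv_eq_neg φ hinv, setIntegral_defectDensity_smul_periodic hφ hφc,
    neg_zero]

/-- The defect measure density `g(t) = 1/(1+t)` on `(0,1)` and `g(t) = −1/(t(1+t))`
on `[1,∞)` is a nonzero integrable function on `(0,∞)` annihilating all the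
exponentials `e^{2πijt}` and `e^{2πik/t}`, `j, k ∈ ℤ`. -/
theorem stmt13 (g : ℝ → ℝ)
    (hg : ∀ t : ℝ, 0 < t → g t = if t < 1 then 1 / (1 + t) else -(1 / (t * (1 + t)))) :
    IntegrableOn g (Set.Ioi 0) ∧
    ¬ (g =ᵐ[volume.restrict (Set.Ioi 0)] 0) ∧
    (∀ j : ℤ, ∫ t in Set.Ioi (0 : ℝ),
      (g t : ℂ) * Complex.exp (Complex.I * ((2 * π * j * t : ℝ) : ℂ)) = 0) ∧
    (∀ k : ℤ, ∫ t in Set.Ioi (0 : ℝ),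
      (g t : ℂ) * Complex.exp (Complex.I * ((2 * π * k / t : ℝ) : ℂ)) = 0) := by
  have hEq : EqOn g defectDensity (Ioi 0) := fun t ht => hg t ht
  have hae : g =ᵐ[volume.restrict (Ioi 0)] defectDensity :=
    ae_restrict_of_forall_mem measurableSet_Ioi hEq
  have hcont (j : ℤ) :
      Continuous fun t : ℝ => Complex.exp (Complex.I * ((2 * π * j * t : ℝ) : ℂ)) := by
    fun_prop
  refine ⟨integrableOn_defectDensity.congr_fun hEq.symm measurableSet_Ioi,
    fun h => not_defectDensity_ae_eq_zero (hae.symm.trans h), fun j => ?_, fun k => ?_⟩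
  · rw [← setIntegral_defectDensity_smul_periodic (periodic_exp_two_pi_int_mul_I j) (hcont j)]
    refine setIntegral_congr_fun measurableSet_Ioi fun t ht => ?_
    simp only [hEq ht, Complex.real_smul]
  · rw [← setIntegral_defectDensity_smul_periodic_comp_inv (periodic_exp_two_pi_int_mul_I k)
      (hcont k)]
    refine setIntegral_congr_fun measurableSet_Ioi fun t ht => ?_
    simp only [hEq ht, Complex.real_smul, div_eq_mul_inv]
end

section
/- Define g : (0,∞) → ℝ by g(t) = 1/(1+t) for 0 < t < 1 and g(t) = −1/(t(1+t)) for t ≥ 1. Then for every real x with x ∉ ℤ, one has ∫₀^∞ g(t)·exp(2πixt) dt ≠ 0. -/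
/-!
Write `e(t) = exp(i a t)`. On `(0,1)` we have `g(t) = 1/(1+t)`, and on `[1,∞)` partial fractions
give `g(t) = 1/(1+t) - 1/t`. Integrating by parts against `e` on both pieces, and substituting
`t ↦ t + 1` in the resulting `∫₁^∞ e(t)/t² dt`, yields
`i a ∫₀^∞ g e = (1 - e^{ia}) (J - 1)` with `J = ∫₀^∞ e(t)/(1+t)² dt`.
For `a = 2πx` with `x ∉ ℤ` the first factor is nonzero, and
`Re J = ∫₀^∞ cos(at)/(1+t)² dt < ∫₀^∞ dt/(1+t)² = 1` because `cos(at) < 1` on an interval.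
-/

open MeasureTheory Real Filter Set Topology
open Complex (I)
open scoped Complex

lemma hasDerivAt_inv_const_add (c : ℝ) {t : ℝ} (ht : c + t ≠ 0) :
    HasDerivAt (fun s => (c + s)⁻¹) (-((c + t) ^ 2)⁻¹) t := by
  simpa using (hasDerivAt_inv ht).comp_const_add c t

lemma tendsto_inv_const_add_atTop (c : ℝ) : Tendsto (fun s : ℝ => (c + s)⁻¹) atTop (𝓝 0) :=
  (tendsto_atTop_add_const_left atTop c tendsto_id).inv_tendsto_atTop

section InvSq

variable {b c : ℝ}

lemma hasDerivAt_neg_inv_const_add (h : 0 < c + b) {t : ℝ} (ht : t ∈ Ici b) :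
    HasDerivAt (fun s => -(c + s)⁻¹) ((c + t) ^ 2)⁻¹ t := by
  simpa using (hasDerivAt_inv_const_add c (by linarith [ht.out] : c + t ≠ 0)).fun_neg

lemma integrableOn_Ioi_inv_const_add_sq (h : 0 < c + b) :
    IntegrableOn (fun t => ((c + t) ^ 2)⁻¹) (Ioi b) :=
  integrableOn_Ioi_deriv_of_nonneg' (fun _ => hasDerivAt_neg_inv_const_add h)
    (fun _ _ => by positivity) (by simpa using (tendsto_inv_const_add_atTop c).neg)

lemma integral_Ioi_inv_const_add_sq (h : 0 < c + b) :
    ∫ t in Ioi b, ((c + t) ^ 2)⁻¹ = (c + b)⁻¹ := by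
  have hlim : Tendsto (fun s => -(c + s)⁻¹) atTop (𝓝 0) := by
    simpa using (tendsto_inv_const_add_atTop c).neg
  rw [integral_Ioi_of_hasDerivAt_of_nonneg' (fun _ => hasDerivAt_neg_inv_const_add h)
    (fun _ _ => by positivity) hlim, zero_sub, neg_neg]

end InvSq

lemma hasDerivAt_cexp_I_mul (a t : ℝ) :
    HasDerivAt (fun s : ℝ => cexp (I * ↑(a * s))) (I * a * cexp (I * ↑(a * t))) t := by
  have := (((hasDerivAt_id t).const_mul a).ofReal_comp.const_mul I).cexp
  simp only [id_eq, mul_one] at this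
  convert this using 1
  ring

lemma continuous_cexp_I_mul (a : ℝ) : Continuous fun t : ℝ => cexp (I * ↑(a * t)) := by
  fun_prop

lemma re_cexp_I_mul (x : ℝ) : (cexp (I * x)).re = cos x := by
  rw [mul_comm]
  exact Complex.exp_ofReal_mul_I_re x

lemma IntegrableOn.ofReal_mul_cexp_I_mul {u : ℝ → ℝ} {s : Set ℝ} (hu : IntegrableOn u s)
    (a : ℝ) : IntegrableOn (fun t => (u t : ℂ) * cexp (I * ↑(a * t))) s :=
  hu.ofReal.mul_bdd (continuous_cexp_I_mul a).aestronglyMeasurable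
    (ae_of_all _ fun _ => (Complex.norm_exp_I_mul_ofReal _).le)

section ByParts

variable {u u' : ℝ → ℝ} (a : ℝ)

lemma integral_mul_cexp_I_mul_by_parts {b c : ℝ}
    (hu : ∀ t ∈ uIcc b c, HasDerivAt u (u' t) t) (hu' : IntervalIntegrable u' volume b c) :
    I * a * ∫ t in b..c, (u t : ℂ) * cexp (I * ↑(a * t)) =
      u c * cexp (I * ↑(a * c)) - u b * cexp (I * ↑(a * b))
        - ∫ t in b..c, (u' t : ℂ) * cexp (I * ↑(a * t)) := by
  rw [← intervalIntegral.integral_const_mul]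
  convert intervalIntegral.integral_mul_deriv_eq_deriv_mul (fun t ht => (hu t ht).ofReal_comp)
    (fun t _ => hasDerivAt_cexp_I_mul a t)
    (intervalIntegrable_iff.2 (Integrable.ofReal (intervalIntegrable_iff.1 hu')))
    ((continuous_const.mul (continuous_cexp_I_mul a)).intervalIntegrable _ _) using 2
  ext t
  ring

lemma integral_Ioi_mul_cexp_I_mul_by_parts {b : ℝ}
    (hu : ∀ t ∈ Ici b, HasDerivAt u (u' t) t) (hui : IntegrableOn u (Ioi b))
    (hu'i : IntegrableOn u' (Ioi b)) (hlim : Tendsto u atTop (𝓝 0)) :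
    I * a * ∫ t in Ioi b, (u t : ℂ) * cexp (I * ↑(a * t)) =
      -(u b * cexp (I * ↑(a * b))) - ∫ t in Ioi b, (u' t : ℂ) * cexp (I * ↑(a * t)) := by
  have hzero : Tendsto (fun t => (u t : ℂ) * cexp (I * ↑(a * t))) (𝓝[>] b)
      (𝓝 (u b * cexp (I * ↑(a * b)))) :=
    ((Complex.continuous_ofReal.continuousAt.comp (hu b self_mem_Ici).continuousAt).mul
      (continuous_cexp_I_mul a).continuousAt).tendsto.mono_left nhdsWithin_le_nhds
  have hinfty : Tendsto (fun t => (u t : ℂ) * cexp (I * ↑(a * t))) atTop (𝓝 0) := by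
    rw [tendsto_zero_iff_norm_tendsto_zero]
    simpa only [norm_mul, Complex.norm_real, Complex.norm_exp_I_mul_ofReal, mul_one, norm_zero]
      using hlim.norm
  rw [← integral_const_mul]
  convert integral_Ioi_mul_deriv_eq_deriv_mul (fun t ht => (hu t (le_of_lt ht : b ≤ t)).ofReal_comp)
    (fun t _ => hasDerivAt_cexp_I_mul a t) ?_ (IntegrableOn.ofReal_mul_cexp_I_mul hu'i a)
    hzero hinfty using 2
  · ext t
    ring
  · ring
  · refine IntegrableOn.congr_fun ((IntegrableOn.ofReal_mul_cexp_I_mul hui a).const_mul (I * a))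
      (fun t _ => ?_) measurableSet_Ioi
    simp only [Pi.mul_apply]
    ring

end ByParts

lemma I_mul_integral_inv_one_add_mul_cexp (a : ℝ) :
    I * a * ∫ t in (0 : ℝ)..1, (((1 + t)⁻¹ : ℝ) : ℂ) * cexp (I * ↑(a * t)) =
      cexp (I * a) / 2 - 1
        + ∫ t in (0 : ℝ)..1, ((((1 + t) ^ 2)⁻¹ : ℝ) : ℂ) * cexp (I * ↑(a * t)) := by
  have hu (t : ℝ) (ht : t ∈ uIcc 0 1) :
      HasDerivAt (fun s => (1 + s)⁻¹) (-((1 + t) ^ 2)⁻¹) t := by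
    rw [uIcc_of_le zero_le_one] at ht
    exact hasDerivAt_inv_const_add 1 (by linarith [ht.1])
  have hu' : IntervalIntegrable (fun t : ℝ => -((1 + t) ^ 2)⁻¹) volume 0 1 :=
    (intervalIntegrable_iff_integrableOn_Ioc_of_le zero_le_one).2
      ((integrableOn_Ioi_inv_const_add_sq (c := 1) (by norm_num)).neg.mono_set Ioc_subset_Ioi_self)
  rw [integral_mul_cexp_I_mul_by_parts a hu hu']
  push_cast
  simp only [mul_one, mul_zero, add_zero, inv_one, Complex.exp_zero, neg_mul,
    intervalIntegral.integral_neg, sub_neg_eq_add]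
  ring

lemma integral_Ioi_one_inv_sq_mul_cexp (a : ℝ) :
    ∫ t in Ioi 1, (((t ^ 2)⁻¹ : ℝ) : ℂ) * cexp (I * ↑(a * t)) =
      cexp (I * a) * ∫ t in Ioi 0, ((((1 + t) ^ 2)⁻¹ : ℝ) : ℂ) * cexp (I * ↑(a * t)) := by
  rw [← (measurePreserving_add_right volume 1).setIntegral_preimage_emb
    (measurableEmbedding_addRight 1), preimage_add_const_Ioi, sub_self, ← integral_const_mul]
  refine setIntegral_congr_fun measurableSet_Ioi fun t _ => ?_
  rw [add_comm t 1, mul_add, Complex.ofReal_add, mul_add, Complex.exp_add, mul_one]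
  ring

lemma inv_one_add_sub_inv_eq {t : ℝ} (ht : 0 < t) : (1 + t)⁻¹ - t⁻¹ = -(1 / (t * (1 + t))) := by
  field_simp
  ring

lemma integrableOn_Ioi_one_inv_one_add_sub_inv :
    IntegrableOn (fun t : ℝ => (1 + t)⁻¹ - t⁻¹) (Ioi 1) := by
  refine Integrable.mono' (integrableOn_Ioi_inv_const_add_sq (c := 0) (b := 1) (by norm_num))
    (by fun_prop) ((ae_restrict_iff' measurableSet_Ioi).2 (ae_of_all _ fun t ht => ?_))
  have ht0 : (0 : ℝ) < t := zero_lt_one.trans ht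
  rw [inv_one_add_sub_inv_eq ht0, norm_neg, one_div, Real.norm_of_nonneg (by positivity), zero_add,
    sq]
  exact inv_anti₀ (by positivity) (mul_le_mul_of_nonneg_left (by linarith) ht0.le)

lemma I_mul_integral_Ioi_one_inv_one_add_sub_inv_mul_cexp (a : ℝ) :
    I * a * ∫ t in Ioi 1, (((1 + t)⁻¹ - t⁻¹ : ℝ) : ℂ) * cexp (I * ↑(a * t)) =
      cexp (I * a) / 2 - (∫ t in Ioi 1, (((t ^ 2)⁻¹ : ℝ) : ℂ) * cexp (I * ↑(a * t)))
        + ∫ t in Ioi 1, ((((1 + t) ^ 2)⁻¹ : ℝ) : ℂ) * cexp (I * ↑(a * t)) := by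
  have hu (t : ℝ) (ht : t ∈ Ici 1) :
      HasDerivAt (fun s => (1 + s)⁻¹ - s⁻¹) ((t ^ 2)⁻¹ - ((1 + t) ^ 2)⁻¹) t := by
    have ht0 : (0 : ℝ) < t := zero_lt_one.trans_le ht
    exact ((hasDerivAt_inv_const_add 1 (by linarith)).sub (hasDerivAt_inv ht0.ne')).congr_deriv
      (by ring)
  have hinv_sq : IntegrableOn (fun t : ℝ => (t ^ 2)⁻¹) (Ioi 1) := by
    simpa using integrableOn_Ioi_inv_const_add_sq (c := 0) (b := 1) (by norm_num)
  have hinv_one_add_sq : IntegrableOn (fun t : ℝ => ((1 + t) ^ 2)⁻¹) (Ioi 1) :=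
    integrableOn_Ioi_inv_const_add_sq (by norm_num)
  have hlim : Tendsto (fun s : ℝ => (1 + s)⁻¹ - s⁻¹) atTop (𝓝 0) := by
    simpa using (tendsto_inv_const_add_atTop 1).sub tendsto_inv_atTop_zero
  have hsplit : ∫ t in Ioi 1, (((t ^ 2)⁻¹ - ((1 + t) ^ 2)⁻¹ : ℝ) : ℂ) * cexp (I * ↑(a * t)) =
      (∫ t in Ioi 1, (((t ^ 2)⁻¹ : ℝ) : ℂ) * cexp (I * ↑(a * t)))
        - ∫ t in Ioi 1, ((((1 + t) ^ 2)⁻¹ : ℝ) : ℂ) * cexp (I * ↑(a * t)) := by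
    rw [← integral_sub (IntegrableOn.ofReal_mul_cexp_I_mul hinv_sq a)
      (IntegrableOn.ofReal_mul_cexp_I_mul hinv_one_add_sq a)]
    simp only [Complex.ofReal_sub, sub_mul]
  rw [integral_Ioi_mul_cexp_I_mul_by_parts a hu integrableOn_Ioi_one_inv_one_add_sub_inv
    (hinv_sq.sub hinv_one_add_sq) hlim, hsplit, mul_one]
  rw [show ((1 + 1)⁻¹ - 1⁻¹ : ℝ) = -2⁻¹ by norm_num]
  push_cast
  ring

lemma integral_Ioi_defect_mul_cexp_split {g : ℝ → ℝ}
    (hg : ∀ t : ℝ, 0 < t → g t = if t < 1 then 1 / (1 + t) else -(1 / (t * (1 + t)))) (a : ℝ) :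
    ∫ t in Ioi 0, (g t : ℂ) * cexp (I * ↑(a * t)) =
      (∫ t in (0 : ℝ)..1, (((1 + t)⁻¹ : ℝ) : ℂ) * cexp (I * ↑(a * t)))
        + ∫ t in Ioi 1, (((1 + t)⁻¹ - t⁻¹ : ℝ) : ℂ) * cexp (I * ↑(a * t)) := by
  have hnear : EqOn (fun t => (g t : ℂ) * cexp (I * ↑(a * t)))
      (fun t => (((1 + t)⁻¹ : ℝ) : ℂ) * cexp (I * ↑(a * t))) (Ioo 0 1) := fun t ht => by
    simp only [hg t ht.1, if_pos ht.2, one_div]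
  have hfar : EqOn (fun t => (g t : ℂ) * cexp (I * ↑(a * t)))
      (fun t => (((1 + t)⁻¹ - t⁻¹ : ℝ) : ℂ) * cexp (I * ↑(a * t))) (Ici 1) := fun t ht => by
    rw [mem_Ici] at ht
    have ht0 : (0 : ℝ) < t := zero_lt_one.trans_le ht
    simp only [hg t ht0, if_neg (not_lt.2 ht), inv_one_add_sub_inv_eq ht0]
  have hnear_int : IntegrableOn (fun t => (((1 + t)⁻¹ : ℝ) : ℂ) * cexp (I * ↑(a * t))) (Ioo 0 1) :=
    (ContinuousOn.integrableOn_Icc (by fun_prop (disch := grind))).mono_set Ioo_subset_Icc_self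
  have hfar_int := ((integrableOn_Ici_iff_integrableOn_Ioi).2
    (IntegrableOn.ofReal_mul_cexp_I_mul integrableOn_Ioi_one_inv_one_add_sub_inv a))
  rw [← Ioo_union_Ici_eq_Ioi zero_lt_one,
    setIntegral_union ((Iio_disjoint_Ici le_rfl).mono_left Ioo_subset_Iio_self) measurableSet_Ici
      (hnear_int.congr_fun hnear.symm measurableSet_Ioo)
      (hfar_int.congr_fun hfar.symm measurableSet_Ici),
    setIntegral_congr_fun measurableSet_Ioo hnear, setIntegral_congr_fun measurableSet_Ici hfar,
    intervalIntegral.integral_of_le zero_le_one, integral_Ioc_eq_integral_Ioo,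
    integral_Ici_eq_integral_Ioi]

theorem I_mul_integral_defect_mul_cexp {g : ℝ → ℝ}
    (hg : ∀ t : ℝ, 0 < t → g t = if t < 1 then 1 / (1 + t) else -(1 / (t * (1 + t)))) (a : ℝ) :
    I * a * ∫ t in Ioi 0, (g t : ℂ) * cexp (I * ↑(a * t)) =
      (1 - cexp (I * a)) *
        ((∫ t in Ioi 0, ((((1 + t) ^ 2)⁻¹ : ℝ) : ℂ) * cexp (I * ↑(a * t))) - 1) := by
  have hJ := IntegrableOn.ofReal_mul_cexp_I_mul
    (integrableOn_Ioi_inv_const_add_sq (c := 1) (b := 0) (by norm_num)) a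
  rw [integral_Ioi_defect_mul_cexp_split hg, mul_add, I_mul_integral_inv_one_add_mul_cexp,
    I_mul_integral_Ioi_one_inv_one_add_sub_inv_mul_cexp, integral_Ioi_one_inv_sq_mul_cexp,
    ← intervalIntegral.integral_interval_add_Ioi hJ (hJ.mono_set (Ioi_subset_Ioi zero_le_one))]
  ring

lemma integral_Ioi_inv_one_add_sq_mul_one_sub_cos_pos {a : ℝ} (ha : a ≠ 0) :
    0 < ∫ t in Ioi 0, ((1 + t) ^ 2)⁻¹ * (1 - cos (a * t)) := by
  set f := fun t : ℝ => ((1 + t) ^ 2)⁻¹ * (1 - cos (a * t))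
  have hf : IntegrableOn f (Ioi 0) :=
    (integrableOn_Ioi_inv_const_add_sq (c := 1) (by norm_num)).mul_bdd (c := 2) (by fun_prop)
      (ae_of_all _ fun t => by
        rw [Real.norm_eq_abs, abs_le]
        constructor <;> linarith [cos_le_one (a * t), neg_one_le_cos (a * t)])
  have hf_nonneg (t : ℝ) : 0 ≤ f t := mul_nonneg (by positivity) (by linarith [cos_le_one (a * t)])
  set T := π / |a|
  have hT : 0 < T := div_pos pi_pos (abs_pos.2 ha)
  have hfT : 0 < f T := by
    have : cos (a * T) = -1 := by
      rw [← cos_abs, abs_mul, abs_div, abs_abs, abs_of_pos pi_pos,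
        mul_div_cancel₀ _ (abs_ne_zero.2 ha), cos_pi]
    simp only [f, this]
    positivity
  have hcont : ContinuousOn f (Icc 0 T) :=
    ((by fun_prop : Continuous fun t : ℝ => (1 + t) ^ 2).continuousOn.inv₀
      fun t ht => pow_ne_zero 2 (by linarith [ht.1])).mul (by fun_prop)
  calc 0 < ∫ t in (0 : ℝ)..T, f t :=
        intervalIntegral.integral_pos hT hcont (fun t _ => hf_nonneg t)
          ⟨T, right_mem_Icc.2 hT.le, hfT⟩
    _ = ∫ t in Ioc 0 T, f t := intervalIntegral.integral_of_le hT.le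
    _ ≤ ∫ t in Ioi 0, f t :=
        setIntegral_mono_set hf (ae_of_all _ hf_nonneg) Ioc_subset_Ioi_self.eventuallyLE

lemma re_integral_Ioi_inv_one_add_sq_mul_cexp_lt_one {a : ℝ} (ha : a ≠ 0) :
    (∫ t in Ioi 0, ((((1 + t) ^ 2)⁻¹ : ℝ) : ℂ) * cexp (I * ↑(a * t))).re < 1 := by
  have hint := integrableOn_Ioi_inv_const_add_sq (c := 1) (b := 0) (by norm_num)
  have hcos : IntegrableOn (fun t => ((1 + t) ^ 2)⁻¹ * cos (a * t)) (Ioi 0) :=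
    hint.mul_bdd (c := 1) (by fun_prop) (ae_of_all _ fun t => by
      rw [Real.norm_eq_abs]
      exact abs_cos_le_one _)
  have hre := integral_re (IntegrableOn.ofReal_mul_cexp_I_mul hint a)
  simp only [RCLike.re_to_complex, Complex.re_ofReal_mul, re_cexp_I_mul] at hre
  have hgap : ∫ t in Ioi 0, ((1 + t) ^ 2)⁻¹ * (1 - cos (a * t)) =
      1 - ∫ t in Ioi 0, ((1 + t) ^ 2)⁻¹ * cos (a * t) := by
    simp only [mul_sub, mul_one]
    rw [integral_sub hint hcos, integral_Ioi_inv_const_add_sq (by norm_num), add_zero, inv_one]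
  rw [← hre, ← sub_pos, ← hgap]
  exact integral_Ioi_inv_one_add_sq_mul_one_sub_cos_pos ha

lemma cexp_I_mul_two_pi_mul_ne_one {x : ℝ} (hx : ∀ n : ℤ, x ≠ n) : cexp (I * ↑(2 * π * x)) ≠ 1 := by
  rw [Ne, Complex.exp_eq_one_iff]
  rintro ⟨n, hn⟩
  have h : ((x : ℂ) - n) * (2 * π * I) = 0 := by
    push_cast at hn
    linear_combination hn
  have hxn := (mul_eq_zero.1 h).resolve_right (by simp [pi_ne_zero, Complex.I_ne_zero])
  exact hx n (by exact_mod_cast sub_eq_zero.1 hxn)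

/-- The Fourier transform of the defect density `g` (with `g(t) = 1/(1+t)` on
`(0,1)` and `g(t) = −1/(t(1+t))` on `[1,∞)`) does not vanish at any non-integer
point: `∫₀^∞ g(t) e^{2πixt} dt ≠ 0` for all real `x ∉ ℤ`. -/
theorem stmt15 (g : ℝ → ℝ)
    (hg : ∀ t : ℝ, 0 < t → g t = if t < 1 then 1 / (1 + t) else -(1 / (t * (1 + t))))
    (x : ℝ) (hx : ∀ n : ℤ, x ≠ (n : ℝ)) :
    ∫ t in Set.Ioi (0 : ℝ),
      (g t : ℂ) * Complex.exp (Complex.I * ((2 * π * x * t : ℝ) : ℂ)) ≠ 0 := by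
  have ha : 2 * π * x ≠ 0 :=
    mul_ne_zero (mul_ne_zero two_ne_zero pi_ne_zero) (by exact_mod_cast hx 0)
  have hJ := re_integral_Ioi_inv_one_add_sq_mul_cexp_lt_one ha
  intro hF
  have key := I_mul_integral_defect_mul_cexp hg (2 * π * x)
  rw [hF, mul_zero, eq_comm] at key
  refine mul_ne_zero (sub_ne_zero.2 (cexp_I_mul_two_pi_mul_ne_one hx).symm)
    (sub_ne_zero.2 fun hJ1 => ?_) key
  rw [hJ1, Complex.one_re] at hJ
  exact hJ.false
end

section
/- For every x > 0, the improper integrals c(x) = lim_{R→∞} ∫_x^R (cos y)/y dy and s(x) = lim_{R→∞} ∫_x^R (sin y)/y dy both exist as finite limits, and (c(x), s(x)) ≠ (0, 0); that is, c(x) and s(x) do not vanish simultaneously. -/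
/-!
Both integrals converge after one integration by parts: against a bounded antiderivative `G`
of `g`, the integral `∫_x^R g y / y` is a boundary term `O(1/R)` plus the absolutely
convergent `∫_x^R G y / y²`. If `c(x) = s(x) = 0`, the addition formula for `sin` gives
`∫_x^∞ sin (y - x) / y dy = cos x · s(x) - sin x · c(x) = 0`. But integrating by parts
against the antiderivative `1 - cos (y - x)`, which vanishes at `y = x`, gives
`∫_x^∞ sin (y - x) / y dy = ∫_x^∞ (1 - cos (y - x)) / y² dy > 0`.
-/

open MeasureTheory Real Filter Set Topology
open scoped Interval

section IntegrationByParts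

variable {g G : ℝ → ℝ} {x : ℝ}

theorem integral_div_eq_of_hasDerivAt (hg : Continuous g) (hG : ∀ y, HasDerivAt G (g y) y)
    (hx : 0 < x) {R : ℝ} (hxR : x ≤ R) :
    ∫ y in x..R, g y / y = G R / R - G x / x + ∫ y in x..R, G y / y ^ 2 := by
  have hpos : ∀ y ∈ [[x, R]], 0 < y := fun y hy => hx.trans_le (uIcc_of_le hxR ▸ hy).1
  have hinv : ∀ y ∈ [[x, R]], HasDerivAt (fun y => y⁻¹) (-(y ^ 2)⁻¹) y :=
    fun y hy => hasDerivAt_inv (hpos y hy).ne'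
  have hinv' : IntervalIntegrable (fun y : ℝ => -(y ^ 2)⁻¹) volume x R :=
    ((continuousOn_pow 2).inv₀ fun y hy => (pow_pos (hpos y hy) 2).ne').neg.intervalIntegrable
  have h := intervalIntegral.integral_mul_deriv_eq_deriv_mul hinv (fun y _ => hG y) hinv'
    (hg.intervalIntegrable _ _)
  simp only [neg_mul, intervalIntegral.integral_neg, sub_neg_eq_add] at h
  simpa only [div_eq_inv_mul] using h

theorem integrableOn_Ioi_div_sq (hG : Continuous G) {C : ℝ} (hC : ∀ y, |G y| ≤ C)
    (hx : 0 < x) :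
    IntegrableOn (fun y => G y / y ^ 2) (Ioi x) := by
  have h := (integrableOn_Ioi_rpow_of_lt (by norm_num : (-2 : ℝ) < -1) hx).bdd_mul
    hG.aestronglyMeasurable (ae_of_all _ fun y => (norm_eq_abs (G y)).trans_le (hC y))
  refine IntegrableOn.congr_fun h (fun y hy => ?_) measurableSet_Ioi
  rw [rpow_neg (hx.trans hy).le, rpow_two, div_eq_mul_inv]

theorem tendsto_integral_div_of_hasDerivAt (hg : Continuous g) (hG : ∀ y, HasDerivAt G (g y) y)
    {C : ℝ} (hC : ∀ y, |G y| ≤ C) (hx : 0 < x) :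
    Tendsto (fun R => ∫ y in x..R, g y / y) atTop
      (𝓝 ((∫ y in Ioi x, G y / y ^ 2) - G x / x)) := by
  have hGc : Continuous G := Differentiable.continuous fun y => (hG y).differentiableAt
  have hbdry : Tendsto (fun R => G R / R) atTop (𝓝 0) := by
    simp only [div_eq_inv_mul]
    exact tendsto_inv_atTop_zero.zero_mul_isBoundedUnder_le
      ⟨C, eventually_map.2 (Eventually.of_forall fun R => (norm_eq_abs (G R)).trans_le (hC R))⟩
  have hrem :=
    intervalIntegral_tendsto_integral_Ioi x (integrableOn_Ioi_div_sq hGc hC hx) tendsto_id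
  have h := (hbdry.sub_const (G x / x)).add hrem
  rw [zero_sub, neg_add_eq_sub] at h
  exact h.congr' ((eventually_ge_atTop x).mono fun R hR =>
    (integral_div_eq_of_hasDerivAt hg hG hx hR).symm)

end IntegrationByParts

section SineCosineIntegrals

variable {x : ℝ}

theorem abs_one_sub_cos_le_two (t : ℝ) : |1 - cos t| ≤ 2 :=
  abs_le.2 ⟨by linarith [cos_le_one t], by linarith [neg_one_le_cos t]⟩

theorem tendsto_integral_cos_div (hx : 0 < x) :
    Tendsto (fun R => ∫ y in x..R, cos y / y) atTop
      (𝓝 ((∫ y in Ioi x, sin y / y ^ 2) - sin x / x)) :=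
  tendsto_integral_div_of_hasDerivAt continuous_cos hasDerivAt_sin abs_sin_le_one hx

theorem tendsto_integral_sin_div (hx : 0 < x) :
    Tendsto (fun R => ∫ y in x..R, sin y / y) atTop
      (𝓝 ((∫ y in Ioi x, -cos y / y ^ 2) - -cos x / x)) :=
  tendsto_integral_div_of_hasDerivAt continuous_sin
    (fun y => (hasDerivAt_cos y).neg.congr_deriv (neg_neg _))
    (fun y => (abs_neg (cos y)).trans_le (abs_cos_le_one y)) hx

theorem tendsto_integral_sin_sub_self_div (hx : 0 < x) :
    Tendsto (fun R => ∫ y in x..R, sin (y - x) / y) atTop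
      (𝓝 (∫ y in Ioi x, (1 - cos (y - x)) / y ^ 2)) := by
  have hG : ∀ y, HasDerivAt (fun y => 1 - cos (y - x)) (sin (y - x)) y := fun y => by
    simpa using ((hasDerivAt_cos (y - x)).comp y ((hasDerivAt_id y).sub_const x)).const_sub 1
  simpa using tendsto_integral_div_of_hasDerivAt (by fun_prop) hG
    (fun y => abs_one_sub_cos_le_two (y - x)) hx

theorem integral_sin_sub_div (a : ℝ) (hx : 0 < x) {R : ℝ} (hxR : x ≤ R) :
    ∫ y in x..R, sin (y - a) / y =
      cos a * (∫ y in x..R, sin y / y) - sin a * ∫ y in x..R, cos y / y := by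
  have hne : ∀ y ∈ [[x, R]], y ≠ 0 := fun y hy => (hx.trans_le (uIcc_of_le hxR ▸ hy).1).ne'
  have hsin : IntervalIntegrable (fun y => sin y / y) volume x R :=
    (continuous_sin.continuousOn.div continuousOn_id hne).intervalIntegrable
  have hcos : IntervalIntegrable (fun y => cos y / y) volume x R :=
    (continuous_cos.continuousOn.div continuousOn_id hne).intervalIntegrable
  rw [← intervalIntegral.integral_const_mul, ← intervalIntegral.integral_const_mul,
    ← intervalIntegral.integral_sub (hsin.const_mul _) (hcos.const_mul _)]
  congr 1 with y
  rw [sin_sub]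
  ring

theorem integral_one_sub_cos_sub_self_div_sq_pos (hx : 0 < x) :
    0 < ∫ y in Ioi x, (1 - cos (y - x)) / y ^ 2 := by
  have hint := integrableOn_Ioi_div_sq (G := fun y => 1 - cos (y - x)) (by fun_prop)
    (fun y => abs_one_sub_cos_le_two (y - x)) hx
  have hnonneg : 0 ≤ᵐ[volume.restrict (Ioi x)] fun y => (1 - cos (y - x)) / y ^ 2 :=
    ae_of_all _ fun y => div_nonneg (sub_nonneg.2 (cos_le_one _)) (sq_nonneg y)
  rw [setIntegral_pos_iff_support_of_nonneg_ae hnonneg hint]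
  have hsupp :
      Ioo x (x + 2 * π) ⊆ Function.support (fun y => (1 - cos (y - x)) / y ^ 2) ∩ Ioi x := by
    rintro y ⟨hxy, hy⟩
    refine ⟨div_ne_zero (sub_ne_zero.2 fun h => ?_) (pow_ne_zero 2 (hx.trans hxy).ne'), hxy⟩
    have := (cos_eq_one_iff_of_lt_of_lt (by linarith [pi_pos]) (by linarith)).1 h.symm
    linarith
  exact ((Measure.measure_Ioo_pos _).2 (by linarith [pi_pos])).trans_le (measure_mono hsupp)

end SineCosineIntegrals

/-- For every `x > 0` the improper integrals `c(x) = ∫_x^∞ (cos y)/y dy` and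
`s(x) = ∫_x^∞ (sin y)/y dy` exist as finite limits and do not vanish
simultaneously: the Nielsen (sici) spiral never passes through the origin. -/
theorem stmt16 (x : ℝ) (hx : 0 < x) :
    ∃ c s : ℝ,
      Tendsto (fun R : ℝ => ∫ y in x..R, Real.cos y / y) atTop (nhds c) ∧
      Tendsto (fun R : ℝ => ∫ y in x..R, Real.sin y / y) atTop (nhds s) ∧
      ¬ (c = 0 ∧ s = 0) := by
  have hc := tendsto_integral_cos_div hx
  have hs := tendsto_integral_sin_div hx
  refine ⟨_, _, hc, hs, ?_⟩
  rintro ⟨hc0, hs0⟩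
  have hshift : Tendsto (fun R => ∫ y in x..R, sin (y - x) / y) atTop (𝓝 0) := by
    have h := (hs.const_mul (cos x)).sub (hc.const_mul (sin x))
    rw [hc0, hs0, mul_zero, mul_zero, sub_zero] at h
    exact h.congr' ((eventually_ge_atTop x).mono fun R hR => (integral_sin_sub_div x hx hR).symm)
  exact (integral_one_sub_cos_sub_self_div_sq_pos hx).ne'
    (tendsto_nhds_unique (tendsto_integral_sin_sub_self_div hx) hshift)
end

section
/- Let ν be a finite complex Borel measure on ℝ with |ν|({0}) = 0. If ∫_ℝ exp(iπξ₁t) dν(t) = 0 for every ξ₁ > 0 and ∫_ℝ exp(iπξ₂/t) dν(t) = 0 for every ξ₂ > 0, then ν = 0. -/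
/-!
For `Im w < 0`, writing `(t - w)⁻¹` as a Laplace integral of `ξ ↦ e^{iπξ(t - w)}` over `ξ > 0`
and applying Fubini shows that the Cauchy transform `∫ (t - w)⁻¹ dν(t)` vanishes by the first
family of hypotheses. The second family, applied in the same way to `t ↦ 1/t`, gives the same in
the upper half-plane, because `(1/t - 1/w)⁻¹ = -w - w²(t - w)⁻¹` for `t ≠ 0` and `ν(ℝ) = 0`
(let `ξ₁ → 0`). Differences of Cauchy transforms at conjugate points are Poisson integrals, so `ν`
annihilates every Poisson kernel of the upper half-plane; these form an approximate identity, so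
`ν` annihilates every compactly supported continuous function, hence `ν = 0`.
-/

open MeasureTheory Real Set Filter Topology
open Complex (I)

lemma inv_eq_neg_mul_integral_exp {z : ℂ} (hz : 0 < z.im) :
    z⁻¹ = -(I * π) * ∫ ξ in Ioi (0 : ℝ), Complex.exp (I * π * z * ξ) := by
  have hre : (I * π * z).re < 0 := by simpa using mul_pos pi_pos hz
  have hz0 : z ≠ 0 := by rintro rfl; simp at hz
  rw [integral_exp_mul_complex_Ioi hre 0]
  field_simp
  simp

variable {ρ : Measure ℝ} {h : ℝ → ℂ}

lemma integral_inv_sub_mul_eq_zero_of_im_neg [SFinite ρ] (hint : Integrable h ρ) {k : ℝ → ℝ}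
    (hk : Measurable k)
    (H : ∀ ξ : ℝ, 0 < ξ → ∫ t, Complex.exp (I * ((π * ξ * k t : ℝ) : ℂ)) * h t ∂ρ = 0)
    {w : ℂ} (hw : w.im < 0) :
    ∫ t, ((k t : ℂ) - w)⁻¹ * h t ∂ρ = 0 := by
  set F : ℝ × ℝ → ℂ := fun p => Complex.exp (I * π * ((k p.1 : ℂ) - w) * p.2) * h p.1
  have hF : Integrable F (ρ.prod (volume.restrict (Ioi 0))) := by
    have hexp := integrableOn_exp_mul_Ioi (a := π * w.im) (by nlinarith [pi_pos]) 0
    refine (hint.norm.mul_prod hexp).mono' ?_ (Eventually.of_forall fun p => ?_)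
    · exact (Measurable.aestronglyMeasurable (by fun_prop)).mul hint.1.comp_fst
    · simp [F, Complex.norm_exp, mul_comm]
  have hF_eq (t ξ : ℝ) : F (t, ξ) =
      Complex.exp (-(I * π * w * ξ)) * (Complex.exp (I * ((π * ξ * k t : ℝ) : ℂ)) * h t) := by
    simp only [F, ← mul_assoc, ← Complex.exp_add]
    push_cast; ring_nf
  calc ∫ t, ((k t : ℂ) - w)⁻¹ * h t ∂ρ
      = ∫ t, -(I * π) * (∫ ξ in Ioi (0 : ℝ), F (t, ξ)) ∂ρ := by
        refine integral_congr_ae (Eventually.of_forall fun t => ?_)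
        simp only [F, integral_mul_const]
        rw [inv_eq_neg_mul_integral_exp (by simpa using hw)]
        ring
    _ = -(I * π) * ∫ ξ in Ioi (0 : ℝ), ∫ t, F (t, ξ) ∂ρ := by
        rw [integral_const_mul, integral_integral_swap hF]
    _ = 0 := by
        rw [setIntegral_eq_zero_of_forall_eq_zero fun ξ hξ => ?_, mul_zero]
        simp only [hF_eq, integral_const_mul, H ξ hξ, mul_zero]

lemma integral_eq_zero_of_integral_exp_mul_eq_zero (hint : Integrable h ρ)
    (H : ∀ ξ : ℝ, 0 < ξ → ∫ t, Complex.exp (I * ((π * ξ * t : ℝ) : ℂ)) * h t ∂ρ = 0) :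
    ∫ t, h t ∂ρ = 0 := by
  have hcont : Continuous fun ξ : ℝ => ∫ t, Complex.exp (I * ((π * ξ * t : ℝ) : ℂ)) * h t ∂ρ := by
    refine continuous_of_dominated
      (fun ξ => (Measurable.aestronglyMeasurable (by fun_prop)).mul hint.1)
      (fun ξ => Eventually.of_forall fun t => ?_) hint.norm
      (Eventually.of_forall fun t => by fun_prop)
    simp [Complex.norm_exp]
  have hlim := hcont.continuousWithinAt (s := Ioi 0) (x := 0) |>.tendsto
  simpa using tendsto_nhds_unique hlim
    (tendsto_const_nhds.congr' (eventually_nhdsWithin_of_forall fun ξ hξ => (H ξ hξ).symm))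

lemma norm_inv_ofReal_sub_le {w : ℂ} (hw : w.im ≠ 0) (t : ℝ) :
    ‖((t : ℂ) - w)⁻¹‖ ≤ |w.im|⁻¹ := by
  rw [norm_inv]
  refine inv_anti₀ (abs_pos.2 hw) ?_
  simpa using Complex.abs_im_le_norm ((t : ℂ) - w)

lemma integrable_inv_ofReal_sub_mul (hint : Integrable h ρ) {w : ℂ} (hw : w.im ≠ 0) :
    Integrable (fun t : ℝ => ((t : ℂ) - w)⁻¹ * h t) ρ :=
  hint.bdd_mul (by fun_prop) (Eventually.of_forall (norm_inv_ofReal_sub_le hw))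

lemma integral_inv_ofReal_sub_mul_eq_zero [SFinite ρ] (h0 : ρ {0} = 0) (hint : Integrable h ρ)
    (h1 : ∀ ξ : ℝ, 0 < ξ → ∫ t, Complex.exp (I * ((π * ξ * t : ℝ) : ℂ)) * h t ∂ρ = 0)
    (h2 : ∀ ξ : ℝ, 0 < ξ → ∫ t, Complex.exp (I * ((π * ξ / t : ℝ) : ℂ)) * h t ∂ρ = 0)
    {w : ℂ} (hw : w.im ≠ 0) :
    ∫ t, ((t : ℂ) - w)⁻¹ * h t ∂ρ = 0 := by
  rcases hw.lt_or_gt with hlt | hgt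
  · exact integral_inv_sub_mul_eq_zero_of_im_neg hint measurable_id h1 hlt
  have hw0 : w ≠ 0 := by rintro rfl; simp at hgt
  have hinv := integral_inv_sub_mul_eq_zero_of_im_neg hint measurable_inv
    (fun ξ hξ => by simpa only [div_eq_mul_inv] using h2 ξ hξ) (w := w⁻¹)
    (by rw [Complex.inv_im]
        exact div_neg_of_neg_of_pos (neg_lt_zero.2 hgt) (Complex.normSq_pos.2 hw0))
  have hae : ∀ᵐ t ∂ρ, (((t⁻¹ : ℝ) : ℂ) - w⁻¹)⁻¹ * h t =
      -w * h t + -w ^ 2 * (((t : ℂ) - w)⁻¹ * h t) := by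
    refine (measure_eq_zero_iff_ae_notMem.1 h0).mono fun t ht => ?_
    have ht0 : (t : ℂ) ≠ 0 := by exact_mod_cast ht
    have htw : w - t ≠ 0 := sub_ne_zero.2 fun he => by simp [he] at hgt
    have htw' : (t : ℂ) - w ≠ 0 := by rwa [← neg_sub, neg_ne_zero]
    rw [Complex.ofReal_inv, inv_sub_inv ht0 hw0]
    field_simp
    ring
  rwa [integral_congr_ae hae, integral_add (hint.const_mul _)
    ((integrable_inv_ofReal_sub_mul hint hw).const_mul _), integral_const_mul, integral_const_mul,
    integral_eq_zero_of_integral_exp_mul_eq_zero hint h1, mul_zero, zero_add, mul_eq_zero,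
    neg_eq_zero, or_iff_right (pow_ne_zero 2 hw0)] at hinv

/-- `c * halfPlanePoissonKernel (c * (t - x))` is the Poisson kernel of the upper half-plane at
the point `x + i / c`. -/
noncomputable def halfPlanePoissonKernel (x : ℝ) : ℝ := (π * (1 + x ^ 2))⁻¹

lemma halfPlanePoissonKernel_nonneg (x : ℝ) : 0 ≤ halfPlanePoissonKernel x := by
  unfold halfPlanePoissonKernel; positivity

lemma halfPlanePoissonKernel_le (x : ℝ) : halfPlanePoissonKernel x ≤ π⁻¹ := by
  unfold halfPlanePoissonKernel
  gcongr
  nlinarith [sq_nonneg x, pi_pos]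

@[fun_prop]
lemma continuous_halfPlanePoissonKernel : Continuous halfPlanePoissonKernel :=
  (by fun_prop : Continuous fun x : ℝ => π * (1 + x ^ 2)).inv₀ fun x => by positivity

lemma integral_halfPlanePoissonKernel : ∫ x, halfPlanePoissonKernel x = 1 := by
  simp only [halfPlanePoissonKernel, mul_inv, integral_const_mul, integral_univ_inv_one_add_sq]
  exact inv_mul_cancel₀ pi_ne_zero

lemma integral_mul_halfPlanePoissonKernel_mul_sub {c : ℝ} (hc : 0 < c) (t : ℝ) :
    ∫ x, c * halfPlanePoissonKernel (c * (t - x)) = 1 := by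
  rw [integral_const_mul, integral_sub_left_eq_self (fun y => halfPlanePoissonKernel (c * y)),
    Measure.integral_comp_mul_left, integral_halfPlanePoissonKernel, abs_inv, abs_of_pos hc,
    smul_eq_mul, mul_one, mul_inv_cancel₀ hc.ne']

lemma tendsto_norm_mul_halfPlanePoissonKernel_cobounded :
    Tendsto (fun x : ℝ => ‖x‖ * halfPlanePoissonKernel x) (Bornology.cobounded ℝ) (𝓝 0) := by
  have hbound (x : ℝ) : ‖x‖ * halfPlanePoissonKernel x ≤ π⁻¹ * ‖x⁻¹‖ := by
    rcases eq_or_ne x 0 with rfl | hx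
    · simp
    rw [Real.norm_eq_abs, norm_inv, Real.norm_eq_abs, halfPlanePoissonKernel]
    field_simp
    rw [sq_abs]
    linarith
  exact squeeze_zero (fun x => mul_nonneg (norm_nonneg x) (halfPlanePoissonKernel_nonneg x))
    hbound (by simpa using (tendsto_inv₀_cobounded (α := ℝ)).norm.const_mul π⁻¹)

lemma integral_halfPlanePoissonKernel_smul_eq_zero (hint : Integrable h ρ)
    (hC : ∀ w : ℂ, w.im ≠ 0 → ∫ t, ((t : ℂ) - w)⁻¹ * h t ∂ρ = 0) {c : ℝ} (hc : c ≠ 0) (x : ℝ) :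
    ∫ t, halfPlanePoissonKernel (c * (t - x)) • h t ∂ρ = 0 := by
  have hc' : (c : ℂ) ≠ 0 := by exact_mod_cast hc
  have him : (x - I / c).im ≠ 0 ∧ (x + I / c).im ≠ 0 := by simp [Complex.div_im, hc]
  have hP (t : ℝ) : halfPlanePoissonKernel (c * (t - x)) • h t = I / (2 * π * c) *
      (((t : ℂ) - (x - I / c))⁻¹ * h t - ((t : ℂ) - (x + I / c))⁻¹ * h t) := by
    have h1 : (t : ℂ) - (x - I / c) = (c * (t - x) + I) / c := by field_simp; ring
    have h2 : (t : ℂ) - (x + I / c) = (c * (t - x) - I) / c := by field_simp; ring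
    have hp : (c * (t - x) + I : ℂ) ≠ 0 := fun he => by simpa using congrArg Complex.im he
    have hm : (c * (t - x) - I : ℂ) ≠ 0 := fun he => by simpa using congrArg Complex.im he
    have hq : (1 + ((c * (t - x)) : ℂ) ^ 2) = (c * (t - x) + I) * (c * (t - x) - I) := by
      ring_nf; rw [Complex.I_sq]; ring
    rw [Complex.real_smul, h1, h2, inv_div, inv_div, halfPlanePoissonKernel]
    push_cast
    rw [hq]
    field_simp
    ring_nf
    rw [Complex.I_sq]
    ring
  rw [integral_congr_ae (Eventually.of_forall hP), integral_const_mul,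
    integral_sub (integrable_inv_ofReal_sub_mul hint him.1)
      (integrable_inv_ofReal_sub_mul hint him.2), hC _ him.1, hC _ him.2, sub_zero, mul_zero]

lemma integral_poissonIntegral_smul_eq_zero [SFinite ρ] (hint : Integrable h ρ)
    (hP : ∀ c x : ℝ, 0 < c → ∫ t, halfPlanePoissonKernel (c * (t - x)) • h t ∂ρ = 0)
    {g : ℝ → ℝ} (hg : Continuous g) (hgi : Integrable g) {c : ℝ} (hc : 0 < c) :
    ∫ t, (∫ x, c * halfPlanePoissonKernel (c * (t - x)) * g x) • h t ∂ρ = 0 := by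
  set F : ℝ × ℝ → ℂ := fun p => (c * halfPlanePoissonKernel (c * (p.1 - p.2)) * g p.2) • h p.1
  have hF : Integrable F (ρ.prod volume) := by
    refine (hint.norm.mul_prod (hgi.norm.const_mul (c * π⁻¹))).mono' ?_
      (Eventually.of_forall fun p => ?_)
    · exact (by fun_prop : Continuous fun p : ℝ × ℝ =>
        c * halfPlanePoissonKernel (c * (p.1 - p.2)) * g p.2).aestronglyMeasurable.smul
        hint.1.comp_fst
    · have hle := halfPlanePoissonKernel_le (c * (p.1 - p.2))
      have hnonneg := halfPlanePoissonKernel_nonneg (c * (p.1 - p.2))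
      simp only [F, norm_smul, norm_mul, Real.norm_of_nonneg hc.le, Real.norm_of_nonneg hnonneg]
      rw [mul_comm ‖h p.1‖]
      gcongr
  have hFx (t x : ℝ) : F (t, x) = (c * g x) • halfPlanePoissonKernel (c * (t - x)) • h t := by
    simp only [F, smul_smul]; ring_nf
  calc ∫ t, (∫ x, c * halfPlanePoissonKernel (c * (t - x)) * g x) • h t ∂ρ
      = ∫ t, (∫ x, F (t, x)) ∂ρ := by simp_rw [F, integral_smul_const]
    _ = ∫ x, (∫ t, F (t, x) ∂ρ) := integral_integral_swap hF
    _ = 0 := by simp only [hFx, integral_smul, hP c _ hc, smul_zero, integral_zero]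

lemma integral_smul_eq_zero_of_halfPlanePoissonKernel [SFinite ρ] (hint : Integrable h ρ)
    (hP : ∀ c x : ℝ, 0 < c → ∫ t, halfPlanePoissonKernel (c * (t - x)) • h t ∂ρ = 0)
    {g : ℝ → ℝ} (hg : Continuous g) (hgs : HasCompactSupport g) :
    ∫ t, g t • h t ∂ρ = 0 := by
  obtain ⟨C, hC⟩ := hg.bounded_above_of_compact_support hgs
  have hgi : Integrable g := hg.integrable_of_hasCompactSupport hgs
  set W : ℝ → ℝ → ℝ := fun c t => ∫ x, c * halfPlanePoissonKernel (c * (t - x)) * g x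
  have hW_le {c : ℝ} (hc : 0 < c) (t : ℝ) : ‖W c t‖ ≤ C := by
    have hK := integral_mul_halfPlanePoissonKernel_mul_sub hc t
    calc ‖W c t‖ ≤ ∫ x, c * halfPlanePoissonKernel (c * (t - x)) * C := by
          refine norm_integral_le_of_norm_le
            ((Integrable.of_integral_ne_zero (by simp [hK])).mul_const C)
            (Eventually.of_forall fun x => ?_)
          have := halfPlanePoissonKernel_nonneg (c * (t - x))
          rw [norm_mul, Real.norm_of_nonneg (by positivity)]
          exact mul_le_mul_of_nonneg_left (hC x) (by positivity)
      _ = C := by rw [integral_mul_const, hK, one_mul]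
  have hW_tendsto (t : ℝ) : Tendsto (fun c => W c t) atTop (𝓝 (g t)) := by
    simpa [W] using tendsto_integral_comp_smul_smul_of_integrable' halfPlanePoissonKernel_nonneg
      integral_halfPlanePoissonKernel
      (by simpa using tendsto_norm_mul_halfPlanePoissonKernel_cobounded) hgi hg.continuousAt
      (x₀ := t)
  have hW_meas (c : ℝ) : AEStronglyMeasurable (W c) ρ :=
    (by fun_prop : Continuous fun p : ℝ × ℝ => c * halfPlanePoissonKernel (c * (p.1 - p.2)) * g p.2)
      |>.aestronglyMeasurable.integral_prod_right'
  have hlim : Tendsto (fun c => ∫ t, W c t • h t ∂ρ) atTop (𝓝 (∫ t, g t • h t ∂ρ)) := by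
    refine tendsto_integral_filter_of_dominated_convergence (fun t => C * ‖h t‖)
      (Eventually.of_forall fun c => (hW_meas c).smul hint.1) ?_ (hint.norm.const_mul C)
      (Eventually.of_forall fun t => (hW_tendsto t).smul_const (h t))
    filter_upwards [eventually_gt_atTop 0] with c hc
    exact Eventually.of_forall fun t => by
      rw [norm_smul]; exact mul_le_mul_of_nonneg_right (hW_le hc t) (norm_nonneg _)
  refine tendsto_nhds_unique hlim (tendsto_const_nhds.congr' ?_)
  filter_upwards [eventually_gt_atTop 0] with c hc
  exact (integral_poissonIntegral_smul_eq_zero hint hP hg hgi hc).symm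

/-- The complex measure `ν` is encoded as the density `h` against a finite measure `ρ`
(e.g. `ρ = |ν|`), so `ν = 0` reads `h = 0` `ρ`-a.e. -/
theorem stmt17 (ρ : Measure ℝ) (hρ : IsFiniteMeasure ρ) (h0 : ρ {0} = 0)
    (h : ℝ → ℂ) (hint : Integrable h ρ)
    (h1 : ∀ ξ₁ : ℝ, 0 < ξ₁ →
      ∫ t : ℝ, Complex.exp (Complex.I * ((π * ξ₁ * t : ℝ) : ℂ)) * h t ∂ρ = 0)
    (h2 : ∀ ξ₂ : ℝ, 0 < ξ₂ →
      ∫ t : ℝ, Complex.exp (Complex.I * ((π * ξ₂ / t : ℝ) : ℂ)) * h t ∂ρ = 0) :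
    h =ᵐ[ρ] 0 := by
  have hcauchy (w : ℂ) (hw : w.im ≠ 0) : ∫ t, ((t : ℂ) - w)⁻¹ * h t ∂ρ = 0 :=
    integral_inv_ofReal_sub_mul_eq_zero h0 hint h1 h2 hw
  have hpoisson (c x : ℝ) (hc : 0 < c) :
      ∫ t, halfPlanePoissonKernel (c * (t - x)) • h t ∂ρ = 0 :=
    integral_halfPlanePoissonKernel_smul_eq_zero hint hcauchy hc.ne' x
  exact ae_eq_zero_of_integral_contDiff_smul_eq_zero hint.locallyIntegrable fun g hg hgs =>
    integral_smul_eq_zero_of_halfPlanePoissonKernel hint hpoisson hg.continuous hgs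
end

section
/- Let f ∈ L¹(ℝ;ℂ) satisfy ∫_ℝ f(t)·exp(iπτt) dt = 0 for all τ > 0. Then ∫_ℝ f(t)·exp(−iπξ/t) dt = 0 for all ξ > 0. -/
/-!
For `ε > 0` the function `t ↦ c / (t + iε)` is the Fourier–Laplace transform
`∫_{σ>0} g(σ) e^{iσt} dσ` of `g(σ) = -i c e^{-εσ}`. By Fubini, multiplying an `f ∈ H¹₊` by such a
transform keeps it in `H¹₊`, so every power `(c / (t + iε))ⁿ` is annihilated by `f`, and expanding
the exponential gives `∫ f(t) e^{c/(t+iε)} dt = 0`. For `c = -iπξ` these exponentials have modulus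
at most `1`, and dominated convergence as `ε → 0⁺` yields the claim.
-/

open MeasureTheory Real Set Filter Topology

theorem Complex.norm_exp_neg_I_mul_div_le_one {a : ℝ} (ha : 0 ≤ a) {z : ℂ} (hz : 0 ≤ z.im) :
    ‖Complex.exp (-(Complex.I * a) / z)‖ ≤ 1 := by
  rw [Complex.norm_exp, Real.exp_le_one_iff]
  simpa [Complex.div_re, neg_div] using div_nonneg (mul_nonneg ha hz) (Complex.normSq_nonneg z)

theorem Complex.ofReal_add_mul_I_ne_zero (t : ℝ) {ε : ℝ} (hε : ε ≠ 0) :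
    (t : ℂ) + ε * Complex.I ≠ 0 :=
  fun h => hε (by simpa using congrArg Complex.im h)

theorem integral_mul_exp_eq_zero_of_moments {α : Type*} [MeasurableSpace α] {μ : Measure α}
    {f w : α → ℂ} {C : ℝ} (hf : Integrable f μ) (hw : AEStronglyMeasurable w μ)
    (hwC : ∀ᵐ x ∂μ, ‖w x‖ ≤ C) (hmom : ∀ n : ℕ, ∫ x, f x * w x ^ n ∂μ = 0) :
    ∫ x, f x * Complex.exp (w x) ∂μ = 0 := by
  set F : ℕ → α → ℂ := fun n x => f x * (w x ^ n / n.factorial) with hF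
  have hF_le : ∀ n, ∀ᵐ x ∂μ, ‖F n x‖ ≤ ‖f x‖ * (C ^ n / n.factorial) := by
    intro n
    filter_upwards [hwC] with x hx
    simp only [hF, norm_mul, norm_div, norm_pow, Complex.norm_natCast]
    gcongr
  have hF_int : ∀ n, Integrable (F n) μ := fun n =>
    (hf.norm.mul_const _).mono' (by fun_prop) (hF_le n)
  have hF_sum : Summable fun n => ∫ x, ‖F n x‖ ∂μ := by
    refine .of_nonneg_of_le (fun n => integral_nonneg fun _ => norm_nonneg _) (fun n => ?_)
      ((Real.summable_pow_div_factorial C).mul_left (∫ x, ‖f x‖ ∂μ))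
    rw [← integral_mul_const]
    exact integral_mono_ae (hF_int n).norm (hf.norm.mul_const _) (hF_le n)
  have hF_tsum : ∀ x, ∑' n, F n x = f x * Complex.exp (w x) := by
    intro x
    rw [Complex.exp_eq_exp_ℂ, ← (NormedSpace.expSeries_div_hasSum_exp (w x)).tsum_eq,
      ← tsum_mul_left]
  simp_rw [← hF_tsum, ← integral_tsum_of_summable_integral_norm hF_int hF_sum, hF, mul_div_assoc',
    integral_div, hmom, zero_div, tsum_zero]

/-- `H¹₊(ℝ)`, the boundary values of the Hardy space `H¹` of the upper half-plane, normalised with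
the frequencies `e^{iτt}` rather than the `e^{iπτt}` of the theorem. -/
def MemHardyOne (f : ℝ → ℂ) : Prop :=
  Integrable f ∧ ∀ τ : ℝ, 0 < τ → ∫ t, f t * Complex.exp (Complex.I * ((τ * t : ℝ) : ℂ)) = 0

noncomputable def fourierLaplace (g : ℝ → ℂ) (t : ℝ) : ℂ :=
  ∫ σ in Ioi 0, g σ * Complex.exp (Complex.I * ((σ * t : ℝ) : ℂ))

theorem fourierLaplace_const_mul_exp_neg (c : ℂ) {ε : ℝ} (hε : 0 < ε) (t : ℝ) :
    fourierLaplace (fun σ => c * Complex.exp (-(ε * σ : ℝ))) t =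
      c * Complex.I / (t + ε * Complex.I) := by
  have hre : (-ε + Complex.I * t : ℂ).re < 0 := by simpa using hε
  have hne : (-ε + Complex.I * t : ℂ) ≠ 0 := fun h => by simp [h] at hre
  have hne' := Complex.ofReal_add_mul_I_ne_zero t hε.ne'
  calc fourierLaplace (fun σ => c * Complex.exp (-(ε * σ : ℝ))) t
      = c * ∫ σ : ℝ in Ioi 0, Complex.exp ((-ε + Complex.I * t) * σ) := by
        rw [fourierLaplace, ← integral_const_mul]
        congr 1 with σ
        rw [mul_assoc, ← Complex.exp_add]
        push_cast
        congr 2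
        ring
    _ = c * Complex.I / (t + ε * Complex.I) := by
        rw [integral_exp_mul_complex_Ioi hre]
        field_simp
        simp only [Complex.ofReal_zero, mul_zero, Complex.exp_zero]
        linear_combination (-(c * t)) * Complex.I_sq

theorem integrable_prod_mul_exp {f g : ℝ → ℂ} (hf : Integrable f) (hg : IntegrableOn g (Ioi 0))
    (τ : ℝ) :
    Integrable (Function.uncurry fun t σ =>
        f t * g σ * Complex.exp (Complex.I * (((σ + τ) * t : ℝ) : ℂ)))
      (volume.prod (volume.restrict (Ioi 0))) :=
  (hf.mul_prod hg).mul_bdd (by fun_prop)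
    (ae_of_all _ fun p => (Complex.norm_exp_I_mul_ofReal _).le)

namespace MemHardyOne

variable {f : ℝ → ℂ}

theorem integral_eq_zero (hf : MemHardyOne f) : ∫ t, f t = 0 := by
  set F : ℝ → ℂ := fun τ => ∫ t, f t * Complex.exp (Complex.I * ((τ * t : ℝ) : ℂ)) with hF
  have hF_cont : Continuous F :=
    continuous_of_dominated (bound := fun t => ‖f t‖)
      (fun τ => hf.1.aestronglyMeasurable.mul (by fun_prop))
      (fun τ => ae_of_all _ fun t => by rw [norm_mul, Complex.norm_exp_I_mul_ofReal, mul_one])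
      hf.1.norm (ae_of_all _ fun t => by fun_prop)
  have hF_zero : closure (Ioi 0) ⊆ {τ | F τ = 0} :=
    closure_minimal hf.2 (isClosed_eq hF_cont continuous_const)
  simpa [hF] using hF_zero (by simp : (0 : ℝ) ∈ closure (Ioi 0))

theorem mul_fourierLaplace (hf : MemHardyOne f) {g : ℝ → ℂ} (hg : IntegrableOn g (Ioi 0)) :
    MemHardyOne fun t => f t * fourierLaplace g t := by
  have hexpand : ∀ τ t, f t * fourierLaplace g t * Complex.exp (Complex.I * ((τ * t : ℝ) : ℂ)) =
      ∫ σ in Ioi 0, f t * g σ * Complex.exp (Complex.I * (((σ + τ) * t : ℝ) : ℂ)) := by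
    intro τ t
    rw [fourierLaplace, ← integral_const_mul, ← integral_mul_const]
    congr 1 with σ
    push_cast
    rw [add_mul, mul_add, Complex.exp_add]
    ring
  refine ⟨?_, fun τ hτ => ?_⟩
  · refine (integrable_prod_mul_exp hf.1 hg 0).integral_prod_left.congr (ae_of_all _ fun t => ?_)
    simpa using (hexpand 0 t).symm
  · simp_rw [hexpand τ]
    rw [integral_integral_swap (integrable_prod_mul_exp hf.1 hg τ)]
    refine setIntegral_eq_zero_of_forall_eq_zero fun σ hσ => ?_
    simp_rw [mul_comm (f _) (g σ), mul_assoc]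
    rw [integral_const_mul, hf.2 _ (add_pos hσ hτ), mul_zero]

theorem mul_fourierLaplace_pow (hf : MemHardyOne f) {g : ℝ → ℂ} (hg : IntegrableOn g (Ioi 0))
    (n : ℕ) : MemHardyOne fun t => f t * fourierLaplace g t ^ n := by
  induction n with
  | zero => simpa using hf
  | succ n ih => simpa only [pow_succ, mul_assoc] using ih.mul_fourierLaplace hg

theorem integral_mul_exp_div_add_I_eq_zero (hf : MemHardyOne f) (c : ℂ)
    {ε : ℝ} (hε : 0 < ε) : ∫ t, f t * Complex.exp (c / (t + ε * Complex.I)) = 0 := by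
  set g : ℝ → ℂ := fun σ => -Complex.I * c * Complex.exp (-(ε * σ : ℝ))
  have hg : IntegrableOn g (Ioi 0) := by
    simpa [g, neg_mul, IntegrableOn] using
      (integrableOn_exp_mul_complex_Ioi (a := -ε) (by simpa using hε) 0).const_mul (-Complex.I * c)
  have hgL : ∀ t, fourierLaplace g t = c / (t + ε * Complex.I) := fun t => by
    rw [fourierLaplace_const_mul_exp_neg _ hε]
    congr 1
    linear_combination (-c) * Complex.I_sq
  have hbound : ∀ t : ℝ, ‖c / (t + ε * Complex.I)‖ ≤ ‖c‖ / ε := fun t => by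
    rw [norm_div]
    gcongr
    simpa [abs_of_pos hε] using Complex.abs_im_le_norm ((t : ℂ) + ε * Complex.I)
  refine integral_mul_exp_eq_zero_of_moments hf.1 ?_ (ae_of_all _ hbound) fun n => ?_
  · have hne := fun t => Complex.ofReal_add_mul_I_ne_zero t hε.ne'
    exact Continuous.aestronglyMeasurable (by fun_prop)
  · simpa only [hgL] using (hf.mul_fourierLaplace_pow hg n).integral_eq_zero

end MemHardyOne

theorem tendsto_integral_mul_exp_div_add_I {f : ℝ → ℂ} (hf : Integrable f) {a : ℝ} (ha : 0 ≤ a) :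
    Tendsto (fun ε : ℝ => ∫ t, f t * Complex.exp (-(Complex.I * a) / (t + ε * Complex.I)))
      (𝓝[>] 0) (𝓝 (∫ t, f t * Complex.exp (-(Complex.I * a) / t))) := by
  refine tendsto_integral_filter_of_dominated_convergence (fun t => ‖f t‖) ?_ ?_ hf.norm ?_
  · filter_upwards [self_mem_nhdsWithin] with ε hε
    have hne := fun t => Complex.ofReal_add_mul_I_ne_zero t (ne_of_gt hε)
    exact hf.aestronglyMeasurable.mul (Continuous.aestronglyMeasurable (by fun_prop))
  · filter_upwards [self_mem_nhdsWithin] with ε hε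
    refine ae_of_all _ fun t => ?_
    rw [norm_mul]
    refine mul_le_of_le_one_right (norm_nonneg _) (Complex.norm_exp_neg_I_mul_div_le_one ha ?_)
    simpa using hε.le
  · filter_upwards [volume.ae_ne 0] with t ht
    refine tendsto_nhdsWithin_of_tendsto_nhds ?_
    have ht' : (t : ℂ) + (0 : ℝ) * Complex.I ≠ 0 := by simpa using ht
    have hcont : ContinuousAt
        (fun ε : ℝ => f t * Complex.exp (-(Complex.I * a) / (t + ε * Complex.I))) 0 := by
      fun_prop (disch := exact ht')
    simpa using hcont.tendsto

/-- If `f ∈ H¹₊(ℝ)`, i.e. `∫ f(t) e^{iπτt} dt = 0` for all `τ > 0`, then also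
`∫ f(t) e^{−iπξ/t} dt = 0` for all `ξ > 0`, since `t ↦ e^{−iπξ/t}` lies in
`H^∞₊(ℝ)`. -/
theorem stmt18 (f : ℝ → ℂ) (hf : Integrable f)
    (hH : ∀ τ : ℝ, 0 < τ →
      ∫ t : ℝ, f t * Complex.exp (Complex.I * ((π * τ * t : ℝ) : ℂ)) = 0) :
    ∀ ξ : ℝ, 0 < ξ →
      ∫ t : ℝ, f t * Complex.exp (-(Complex.I * ((π * ξ / t : ℝ) : ℂ))) = 0 := by
  intro ξ hξ
  have hHardy : MemHardyOne f := ⟨hf, fun τ hτ => by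
    simpa only [mul_div_cancel₀ τ pi_ne_zero] using hH (τ / π) (by positivity)⟩
  have hzero : ∀ᶠ ε : ℝ in 𝓝[>] 0,
      ∫ t, f t * Complex.exp (-(Complex.I * (π * ξ : ℝ)) / (t + ε * Complex.I)) = 0 :=
    eventually_nhdsWithin_of_forall fun ε hε => hHardy.integral_mul_exp_div_add_I_eq_zero _ hε
  have hlim := tendsto_integral_mul_exp_div_add_I hf (a := π * ξ) (by positivity)
  convert tendsto_nhds_unique hlim (tendsto_const_nhds.congr' (hzero.mono fun _ h => h.symm))
    using 3 with t
  rw [Complex.ofReal_div, ← mul_div_assoc, neg_div]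
end

section
/- Let g : ℂ → ℂ be holomorphic on ℂ∖{0} (i.e. differentiable at every nonzero point), and suppose there is a constant C ≥ 0 such that |g(z)| ≤ C·|z|/|Im z| for every z ∈ ℂ with Im z ≠ 0. Then g is constant on ℂ∖{0}: g(z) = g(w) for all nonzero z, w. -/
/-! On the circle `|z - z₀| = r` one has `conj (z - z₀) = r² / (z - z₀)`, so `Im z` agrees there
with a meromorphic function. Substituting this into Cauchy's formula for `g'(z₀)` expresses `g'(z₀)`
through `∮ Im z · g z / (z - z₀)` and `Im z₀ · g z₀`, both controlled by `|Im z| ‖g z‖ ≤ C ‖z‖`;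
on circles of radius `‖z₀‖ / 2` this gives `‖z g'(z)‖ ≤ 20 C`. By Riemann's removable singularity
theorem and Liouville, `z g'(z)` is a constant `a`, and `a = 0` because `a / z` is the derivative
of `g` and so integrates to zero around the unit circle. Hence `g' = 0` on the connected set
`ℂ ∖ {0}`. -/

open Complex Metric Set Real ComplexConjugate Filter Topology

lemma inv_sq_eq_of_norm_eq {w : ℂ} {r : ℝ} (hw : ‖w‖ = r) (hr : r ≠ 0) :
    (w ^ 2)⁻¹ = (1 - 2 * I * w.im / w) / r ^ 2 := by
  have hw0 : w ≠ 0 := by rintro rfl; simp_all [eq_comm]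
  have hnorm : w * conj w = (r : ℂ) ^ 2 := by
    rw [mul_conj, normSq_eq_norm_sq, hw]; push_cast; rfl
  have him : conj w = w - 2 * I * w.im := by
    have := sub_conj w; push_cast at this; linear_combination -this
  rw [eq_div_iff (by exact_mod_cast pow_ne_zero 2 hr), ← hnorm, him]
  field_simp

theorem deriv_eq_circleIntegral_im_mul {g : ℂ → ℂ} {z₀ : ℂ} {r : ℝ} (hr : 0 < r)
    (hg : DiffContOnCl ℂ g (ball z₀ r)) :
    deriv g z₀ = (2 * I * z₀.im * g z₀
      - (π : ℂ)⁻¹ * ∮ z in C(z₀, r), z.im * g z / (z - z₀)) / r ^ 2 := by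
  have hg_cont : ContinuousOn g (sphere z₀ r) :=
    hg.continuousOn.mono (closure_ball z₀ hr.ne' ▸ sphere_subset_closedBall)
  have hne : ∀ z ∈ sphere z₀ r, z - z₀ ≠ 0 := fun z hz =>
    sub_ne_zero.2 (ne_of_mem_sphere hz hr.ne')
  have integrable : ∀ {f : ℂ → ℂ}, ContinuousOn f (sphere z₀ r) → CircleIntegrable f z₀ r :=
    fun hf => hf.circleIntegrable hr.le
  have cauchy_formula : ∮ z in C(z₀, r), g z / (z - z₀) = 2 * π * I * g z₀ := by
    simpa [div_eq_inv_mul] using hg.circleIntegral_sub_inv_smul (mem_ball_self hr)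
  have integral_eq_zero : ∮ z in C(z₀, r), g z = 0 := hg.circleIntegral_eq_zero hr.le
  have on_circle : EqOn (fun z => (1 / (z - z₀) ^ 2) • g z)
      (fun z => ((r : ℂ) ^ 2)⁻¹ * (g z - 2 * I * (z.im * g z / (z - z₀))
        + 2 * I * z₀.im * (g z / (z - z₀)))) (sphere z₀ r) := by
    intro z hz
    simp only [smul_eq_mul, one_div]
    rw [inv_sq_eq_of_norm_eq (mem_sphere_iff_norm.1 hz) hr.ne', sub_im]
    push_cast
    ring
  have h := hg.deriv_eq_smul_circleIntegral hr
  rw [circleIntegral.integral_congr hr.le on_circle, circleIntegral.integral_const_mul,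
    circleIntegral.integral_add (integrable (by fun_prop (disch := assumption)))
      (integrable (by fun_prop (disch := assumption))),
    circleIntegral.integral_sub (integrable hg_cont)
      (integrable (by fun_prop (disch := assumption))),
    circleIntegral.integral_const_mul, circleIntegral.integral_const_mul, integral_eq_zero,
    cauchy_formula, smul_eq_mul] at h
  have hπ : (π : ℂ) ≠ 0 := ofReal_ne_zero.2 pi_ne_zero
  have hr' : (r : ℂ) ≠ 0 := ofReal_ne_zero.2 hr.ne'
  rw [inv_mul_eq_iff_eq_mul₀ (pow_ne_zero 2 hr')] at h
  rw [eq_div_iff (pow_ne_zero 2 hr')]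
  field_simp
  linear_combination (I / 2) * h + (deriv g z₀ * r ^ 2 * π
    + (∮ z in C(z₀, r), z.im * g z / (z - z₀)) - 2 * π * I * z₀.im * g z₀) * I_sq

theorem norm_deriv_le_of_abs_im_mul_norm_le {g : ℂ → ℂ} {z₀ : ℂ} {r M : ℝ} (hr : 0 < r)
    (hg : DiffContOnCl ℂ g (ball z₀ r)) (hM : ∀ z ∈ sphere z₀ r, |z.im| * ‖g z‖ ≤ M) :
    ‖deriv g z₀‖ ≤ 2 * (|z₀.im| * ‖g z₀‖ + M) / r ^ 2 := by
  have hJ : ‖∮ z in C(z₀, r), z.im * g z / (z - z₀)‖ ≤ 2 * π * r * (M / r) :=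
    circleIntegral.norm_integral_le_of_norm_le_const hr.le fun z hz => by
      rw [norm_div, norm_mul, norm_real, Real.norm_eq_abs, mem_sphere_iff_norm.1 hz]
      exact div_le_div_of_nonneg_right (hM z hz) hr.le
  rw [deriv_eq_circleIntegral_im_mul hr hg, norm_div, norm_pow, norm_real,
    Real.norm_of_nonneg hr.le]
  gcongr
  calc _ ≤ ‖2 * I * z₀.im * g z₀‖ + ‖(π : ℂ)⁻¹ * ∮ z in C(z₀, r), z.im * g z / (z - z₀)‖ :=
        norm_sub_le _ _
    _ ≤ 2 * |z₀.im| * ‖g z₀‖ + π⁻¹ * (2 * π * r * (M / r)) := by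
        simp only [norm_mul, norm_inv, norm_I, norm_real, Real.norm_eq_abs, abs_of_pos pi_pos,
          Complex.norm_two, mul_one]
        gcongr
    _ = 2 * (|z₀.im| * ‖g z₀‖ + M) := by
        field_simp

theorem norm_mul_deriv_le_of_abs_im_mul_norm_le {g : ℂ → ℂ} {C : ℝ} (hC : 0 ≤ C)
    (hg : ∀ z ≠ 0, DifferentiableAt ℂ g z) (hbd : ∀ z, |z.im| * ‖g z‖ ≤ C * ‖z‖) {z : ℂ}
    (hz : z ≠ 0) : ‖z * deriv g z‖ ≤ 20 * C := by
  have hz' : 0 < ‖z‖ := norm_pos_iff.2 hz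
  have hr : 0 < ‖z‖ / 2 := by positivity
  have hball : closedBall z (‖z‖ / 2) ⊆ {0}ᶜ := fun w hw hw0 => by
    rw [mem_closedBall, hw0, dist_zero_left] at hw
    linarith
  have hdiff : DiffContOnCl ℂ g (ball z (‖z‖ / 2)) :=
    DifferentiableOn.diffContOnCl_ball (fun w hw => (hg w hw).differentiableWithinAt) hball
  have hM : ∀ w ∈ sphere z (‖z‖ / 2), |w.im| * ‖g w‖ ≤ C * (3 / 2 * ‖z‖) := fun w hw =>
    (hbd w).trans <| by
      have := norm_le_of_mem_closedBall (sphere_subset_closedBall hw)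
      gcongr
      linarith
  calc ‖z * deriv g z‖
      ≤ ‖z‖ * (2 * (|z.im| * ‖g z‖ + C * (3 / 2 * ‖z‖)) / (‖z‖ / 2) ^ 2) := by
        rw [norm_mul]
        gcongr
        exact norm_deriv_le_of_abs_im_mul_norm_le hr hdiff hM
    _ ≤ ‖z‖ * (2 * (C * ‖z‖ + C * (3 / 2 * ‖z‖)) / (‖z‖ / 2) ^ 2) := by
        gcongr _ * (2 * (?_ + _) / _)
        exact hbd z
    _ = 20 * C := by
        field_simp
        ring

theorem exists_const_of_differentiableOn_compl_singleton_of_norm_le {E : Type*}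
    [NormedAddCommGroup E] [NormedSpace ℂ E] [CompleteSpace E] {f : ℂ → E} {c : ℂ} {M : ℝ}
    (hf : DifferentiableOn ℂ f {c}ᶜ) (hM : ∀ z ≠ c, ‖f z‖ ≤ M) : ∃ a, ∀ z ≠ c, f z = a := by
  set F := Function.update f c (limUnder (𝓝[≠] c) f)
  have hF : Differentiable ℂ F := by
    rw [← differentiableOn_univ]
    refine differentiableOn_update_limUnder_of_bddAbove univ_mem ?_ ⟨M, ?_⟩
    · rwa [← compl_eq_univ_sdiff]
    · rintro _ ⟨z, hz, rfl⟩
      exact hM z hz.2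
  have hFf : EqOn F f {c}ᶜ := fun z hz => Function.update_of_ne hz _ _
  have hbdd : Bornology.IsBounded (range F) := by
    have : Bornology.IsBounded (F '' {c}ᶜ) := isBounded_iff_forall_norm_le.2
      ⟨M, by rintro _ ⟨z, hz, rfl⟩; rw [hFf hz]; exact hM z hz⟩
    refine this.closure.subset ?_
    rw [← image_univ, ← (dense_compl_singleton c).closure_eq]
    exact image_closure_subset_closure_image hF.continuous
  exact ⟨F c, fun z hz => (hFf hz).symm.trans (hF.apply_eq_apply_of_bounded hbdd z c)⟩

theorem eq_zero_of_forall_hasDerivAt_inv_smul {E : Type*} [NormedAddCommGroup E]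
    [NormedSpace ℂ E] [CompleteSpace E] {f : ℂ → E} {a : E}
    (hf : ∀ z ≠ 0, HasDerivAt f (z⁻¹ • a) z) : a = 0 := by
  have h := circleIntegral.integral_eq_zero_of_hasDerivWithinAt zero_le_one fun z hz =>
    (hf z (ne_of_mem_sphere hz one_ne_zero)).hasDerivWithinAt
  have hinv : ∮ z in C(0, 1), z⁻¹ = 2 * π * I := by
    simpa using circleIntegral.integral_sub_center_inv 0 one_ne_zero
  rw [circleIntegral.integral_smul_const, hinv] at h
  exact (smul_eq_zero.1 h).resolve_left two_pi_I_ne_zero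

/-- Function-theoretic core (log-log theorem consequence): a function
holomorphic on `ℂ ∖ {0}` satisfying `|g(z)| ≤ C|z|/|Im z|` off the real axis
must be constant on `ℂ ∖ {0}`. -/
theorem stmt19 (g : ℂ → ℂ) (hol : ∀ z : ℂ, z ≠ 0 → DifferentiableAt ℂ g z)
    (C : ℝ) (hC : 0 ≤ C)
    (hbd : ∀ z : ℂ, z.im ≠ 0 → ‖g z‖ ≤ C * ‖z‖ / |z.im|) :
    ∀ z w : ℂ, z ≠ 0 → w ≠ 0 → g z = g w := by
  have hbd_mul : ∀ z : ℂ, |z.im| * ‖g z‖ ≤ C * ‖z‖ := fun z => by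
    rcases eq_or_ne z.im 0 with h | h
    · simp only [h, abs_zero, zero_mul]
      positivity
    · exact (le_div_iff₀' (abs_pos.2 h)).1 (hbd z h)
  have hdiff : DifferentiableOn ℂ g {0}ᶜ := fun z hz => (hol z hz).differentiableWithinAt
  have hderiv : DifferentiableOn ℂ (deriv g) {0}ᶜ :=
    (hdiff.analyticOnNhd isOpen_compl_singleton).deriv.differentiableOn
  obtain ⟨a, ha⟩ := exists_const_of_differentiableOn_compl_singleton_of_norm_le
    (f := fun z => z * deriv g z) (differentiableOn_id.mul hderiv)
    fun z hz => norm_mul_deriv_le_of_abs_im_mul_norm_le hC hol hbd_mul hz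
  have ha0 : a = 0 := eq_zero_of_forall_hasDerivAt_inv_smul fun z hz => by
    convert (hol z hz).hasDerivAt using 1
    rw [smul_eq_mul, ← ha z hz]
    field_simp
  intro z w hz hw
  refine isOpen_compl_singleton.is_const_of_deriv_eq_zero
    (isConnected_compl_singleton_of_one_lt_rank (by simp) 0).isPreconnected hdiff
    (fun x hx => ?_) hz hw
  exact (mul_eq_zero.1 ((ha x hx).trans ha0)).resolve_left hx
end
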